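/- arXiv:math/9703219 — 6 statements merged into one kernel-verified Lean document; each statement's English description precedes it below -/
import Mathlib

section
/- Let κ < λ < μ be regular cardinals with λ uncountable. If Snr(μ, λ, κ) holds, i.e. there is a function F : T^μ_κ → λ such that for every α ∈ T^μ_λ there is a club C ⊆ α with F restricted to C ∩ T^μ_κ strictly increasing, then Dnr(μ, λ, κ) holds, i.e. for every stationary S ⊆ T^μ_κ there is a stationary T ⊆ S such that for no α ∈ T^μ_λ is T ∩ α stationary in α. -/
open Cardinal Ordinal Set

/-- `C` is a club (closed unbounded set) in the ordinal `α`: it is a subset of `α`,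
unbounded in `α`, and closed in `α` (any `β < α` which is a limit of points of `C`
belongs to `C`). -/
def IsClubIn (C : Set Ordinal) (α : Ordinal) : Prop :=
  C ⊆ Set.Iio α ∧
  (∀ β < α, ∃ γ ∈ C, β ≤ γ) ∧
  (∀ β < α, 0 < β → (∀ γ < β, ∃ δ ∈ C, γ < δ ∧ δ < β) → β ∈ C)

/-- `S` is stationary in the ordinal `α`: it meets every club in `α`. -/
def IsStatIn (S : Set Ordinal) (α : Ordinal) : Prop :=
  ∀ C : Set Ordinal, IsClubIn C α → (S ∩ C).Nonempty

/-- `T^μ_κ`: the set of ordinals below `μ` of cofinality `κ`. -/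
def Tset (μ κ : Cardinal) : Set Ordinal :=
  {α | α < μ.ord ∧ Ordinal.cof α = κ}

/-- The strong non-reflection principle `Snr(μ, λ, κ)`: there is `F : T^μ_κ → λ` such
that every `α ∈ T^μ_λ` has a club `C ⊆ α` with `F` strictly increasing on `C ∩ T^μ_κ`. -/
def Snr (μ lam κ : Cardinal) : Prop :=
  ∃ F : Ordinal → Ordinal,
    (∀ α ∈ Tset μ κ, F α < lam.ord) ∧
    ∀ α ∈ Tset μ lam, ∃ C : Set Ordinal, IsClubIn C α ∧
      StrictMonoOn F (C ∩ Tset μ κ)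

/-- The dense non-reflection principle `Dnr(μ, λ, κ)`: every stationary `S ⊆ T^μ_κ` has a
stationary subset `T` such that `T ∩ α` is non-stationary in `α` for every `α ∈ T^μ_λ`. -/
def Dnr (μ lam κ : Cardinal) : Prop :=
  ∀ S ⊆ Tset μ κ, IsStatIn S μ.ord →
    ∃ T ⊆ S, IsStatIn T μ.ord ∧
      ∀ α ∈ Tset μ lam, ¬ IsStatIn (T ∩ Set.Iio α) α

/-- The reflection principle `Ref(ν, μ, κ)`: every stationary `S ⊆ T^ν_κ` reflects at some
point of `T^ν_μ`. -/
def Ref (ν μ κ : Cardinal) : Prop :=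
  ∀ S ⊆ Tset ν κ, IsStatIn S ν.ord →
    ∃ α ∈ Tset ν μ, IsStatIn (S ∩ Set.Iio α) α

universe u

lemma isClubIn_iInter {μo : Ordinal.{u}} {ι : Type u} [Nonempty ι]
    (hι : #ι < μo.cof) (hω : ℵ₀ < μo.cof)
    (C : ι → Set Ordinal.{u}) (hC : ∀ i, IsClubIn (C i) μo) :
    IsClubIn (⋂ i, C i) μo := by
  have hlim : Order.IsSuccLimit μo := Ordinal.aleph0_le_cof.1 hω.le
  have key : ∀ x, ∃ y, x < μo → (x < y ∧ y < μo ∧ ∀ i, ∃ δ ∈ C i, x ≤ δ ∧ δ < y) := by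
    intro x
    by_cases hx : x < μo
    · choose d hd1 hd2 using fun i => (hC i).2.1 x hx
      refine ⟨(⨆ i, d i) + 1, fun _ => ⟨?_, ?_, fun i => ⟨d i, hd1 i, hd2 i, ?_⟩⟩⟩
      · exact lt_of_le_of_lt (le_trans (hd2 (Classical.arbitrary ι))
          (Ordinal.le_iSup d _)) (Order.lt_succ _)
      · exact hlim.succ_lt (Ordinal.iSup_lt_ord hι fun i => (hC i).1 (hd1 i))
      · exact lt_of_le_of_lt (Ordinal.le_iSup d i) (Order.lt_succ _)
    · exact ⟨0, fun h => absurd h hx⟩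
  choose g hg using key
  refine ⟨(Set.iInter_subset C (Classical.arbitrary ι)).trans (hC _).1, ?_, ?_⟩
  · intro β hβ
    set b : ℕ → Ordinal := fun n => g^[n] β with hb
    have hbsucc : ∀ n, b (n+1) = g (b n) := fun n => Function.iterate_succ_apply' g n β
    have hblt : ∀ n, b n < μo ∧ b n < b (n+1) := by
      intro n
      induction n with
      | zero =>
        obtain ⟨h1, h2, _⟩ := hg β hβ
        exact ⟨hβ, by rw [hbsucc 0]; exact h1⟩
      | succ n ih =>
        have hlt : b (n+1) < μo := by rw [hbsucc n]; exact (hg (b n) ih.1).2.1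
        exact ⟨hlt, by rw [hbsucc (n+1)]; exact (hg (b (n+1)) hlt).1⟩
    refine ⟨⨆ n, b n, ?_, Ordinal.le_iSup b 0⟩
    have hsup_lt : (⨆ n, b n) < μo :=
      Ordinal.iSup_lt_ord_lift (by simpa using hω) fun n => (hblt n).1
    have h0 : 0 < ⨆ n, b n :=
      lt_of_le_of_lt (zero_le (a := _)) ((hblt 0).2.trans_le (Ordinal.le_iSup b 1))
    rw [Set.mem_iInter]
    intro i
    refine (hC i).2.2 _ hsup_lt h0 ?_
    intro γ hγ
    obtain ⟨n, hn⟩ := Ordinal.lt_iSup_iff.1 hγ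
    obtain ⟨δ, hδC, hδ1, hδ2⟩ := (hg (b n) (hblt n).1).2.2 i
    refine ⟨δ, hδC, lt_of_lt_of_le hn hδ1, lt_of_lt_of_le (by rwa [← hbsucc n] at hδ2)
      (Ordinal.le_iSup b (n+1))⟩
  · intro β hβ h0 hap
    rw [Set.mem_iInter]
    intro i
    refine (hC i).2.2 β hβ h0 fun γ hγ => ?_
    obtain ⟨δ, hδ, h1, h2⟩ := hap γ hγ
    exact ⟨δ, Set.mem_iInter.1 hδ i, h1, h2⟩

lemma isClubIn_inter_Ioi {C : Set Ordinal} {α γ : Ordinal} (hC : IsClubIn C α)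
    (hlim : Order.IsSuccLimit α) (hγ : γ < α) : IsClubIn (C ∩ Set.Ioi γ) α := by
  refine ⟨Set.inter_subset_left.trans hC.1, ?_, ?_⟩
  · intro β hβ
    obtain ⟨δ, hδC, hδ⟩ := hC.2.1 (max β (Order.succ γ)) (max_lt hβ (hlim.succ_lt hγ))
    exact ⟨δ, ⟨hδC, lt_of_lt_of_le (Order.lt_succ γ) (le_trans (le_max_right _ _) hδ)⟩,
      le_trans (le_max_left _ _) hδ⟩
  · intro β hβ h0 hap
    refine ⟨hC.2.2 β hβ h0 fun γ' hγ' => ?_, ?_⟩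
    · obtain ⟨δ, hδ, h⟩ := hap γ' hγ'
      exact ⟨δ, hδ.1, h⟩
    · obtain ⟨δ, hδ, _, h2⟩ := hap 0 h0
      exact lt_trans hδ.2 h2

/-- Strong non-reflection implies dense non-reflection. -/
theorem snr_implies_dnr (κ lam μ : Cardinal)
    (hκ : κ.IsRegular) (hlam : lam.IsRegular) (hμ : μ.IsRegular)
    (hκlam : κ < lam) (hlamμ : lam < μ) (hunc : Cardinal.aleph0 < lam)
    (hsnr : Snr μ lam κ) : Dnr μ lam κ := by
  intro S hS hstat
  obtain ⟨F, hF1, hF2⟩ := hsnr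
  have hcof : μ.ord.cof = μ := hμ.cof_eq
  haveI : Nonempty lam.ord.ToType :=
    Ordinal.nonempty_toType_iff.2 (ne_of_gt hlam.ord_pos)
  set ξ : lam.ord.ToType → Ordinal := fun i => ((Ordinal.ToType.mk (o := lam.ord)).symm i : Ordinal)
  set Sv : lam.ord.ToType → Set Ordinal := fun i => {a ∈ S | F a = ξ i} with hSv
  have hex : ∃ i, IsStatIn (Sv i) μ.ord := by
    by_contra hcon
    push_neg at hcon
    have hchoice : ∀ i, ∃ C, IsClubIn C μ.ord ∧ Sv i ∩ C = ∅ := by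
      intro i
      have := hcon i
      simp only [IsStatIn, not_forall] at this
      obtain ⟨C, hclub, hne⟩ := this
      exact ⟨C, hclub, Set.not_nonempty_iff_eq_empty.1 hne⟩
    choose Cc hCc hemp using hchoice
    have hι : #lam.ord.ToType < μ.ord.cof := by
      rw [Cardinal.mk_toType, Cardinal.card_ord, hcof]; exact hlamμ
    have hD : IsClubIn (⋂ i, Cc i) μ.ord :=
      isClubIn_iInter hι (by rw [hcof]; exact hunc.trans hlamμ) Cc hCc
    obtain ⟨a, haS, haD⟩ := hstat _ hD
    have hFa : F a < lam.ord := hF1 a (hS haS)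
    set i := Ordinal.ToType.mk (o := lam.ord) ⟨F a, hFa⟩
    have hξi : ξ i = F a := by
      simp only [ξ, i, OrderIso.symm_apply_apply]
    have : a ∈ Sv i ∩ Cc i := ⟨⟨haS, hξi.symm⟩, Set.mem_iInter.1 haD i⟩
    rw [hemp i] at this
    exact this
  obtain ⟨i, hTstat⟩ := hex
  refine ⟨Sv i, fun a ha => ha.1, hTstat, ?_⟩
  intro α hα hstatα
  obtain ⟨C, hCclub, hmono⟩ := hF2 α hα
  have hαlim : Order.IsSuccLimit α := Ordinal.aleph0_le_cof.1 (hα.2 ▸ hlam.aleph0_le)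
  obtain ⟨γ, ⟨hγT, hγlt⟩, hγC⟩ := hstatα C hCclub
  obtain ⟨δ, ⟨hδT, hδlt⟩, hδC, hδγ⟩ := hstatα _ (isClubIn_inter_Ioi hCclub hαlim hγlt)
  have h1 : F γ < F δ := hmono ⟨hγC, hS hγT.1⟩ ⟨hδC, hS hδT.1⟩ hδγ
  rw [hγT.2, hδT.2] at h1
  exact lt_irrefl _ h1
end

section
/- Let κ < λ < μ be regular cardinals with λ uncountable, and let κ* be a regular cardinal with κ < κ* < λ. If Snr(μ, λ, κ) holds then Snr(μ, λ, κ*) holds. That is, if there is F : T^μ_κ → λ such that for every α ∈ T^μ_λ there is a club C ⊆ α on which F restricted to C ∩ T^μ_κ is strictly increasing, then there is F* : T^μ_{κ*} → λ such that for every α ∈ T^μ_λ there is a club D ⊆ α on which F* restricted to D ∩ T^μ_{κ*} is strictly increasing. -/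
open Cardinal Ordinal Set

universe u

lemma clubIio (α : Ordinal) : IsClubIn (Set.Iio α) α :=
  ⟨subset_rfl, fun β hβ => ⟨β, hβ, le_rfl⟩, fun β hβ _ _ => hβ⟩

/-- Template recursion lemma: climbing `κ`-many times with `next` from `ξ` inside `α`
yields a point of cofinality `κ` which is a limit of `next`-values. -/
lemma exists_cof_point {κ : Cardinal.{u}} (hκ : κ.IsRegular) {α ξ : Ordinal.{u}}
    (hcof : κ < α.cof) (hξ : ξ < α) (next : Ordinal → Ordinal)
    (hnext : ∀ x < α, x < next x ∧ next x < α) :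
    ∃ β, ξ < β ∧ β < α ∧ β.cof = κ ∧
      ∀ γ < β, ∃ x, γ < x ∧ x < α ∧ x < next x ∧ next x < β := by
  have hlim : Order.IsSuccLimit κ.ord := Cardinal.isSuccLimit_ord hκ.aleph0_le
  set g : Ordinal → Ordinal :=
    Ordinal.lt_wf.fix (fun i rec => next (max ξ (Ordinal.bsup.{u,u} i fun j hj => rec j hj))) with hg
  have geq : ∀ i, g i = next (max ξ (Ordinal.bsup i fun j _ => g j)) := fun i => by
    rw [hg]; exact WellFounded.fix_eq _ _ i
  have key : ∀ i, i ≤ κ.ord →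
      max ξ (Ordinal.bsup i fun j _ => g j) < α ∧ g i < α ∧ ξ < g i := by
    intro i
    induction i using Ordinal.induction with
    | h i IH =>
      intro hi
      have hM : max ξ (Ordinal.bsup i fun j _ => g j) < α := by
        apply max_lt hξ
        apply Ordinal.bsup_lt_ord
        · exact lt_of_le_of_lt
            (le_trans (Ordinal.card_le_card hi) (le_of_eq (Cardinal.card_ord κ))) hcof
        · exact fun j hj => (IH j hj (le_of_lt (lt_of_lt_of_le hj hi))).2.1
      have h2 := hnext _ hM
      exact ⟨hM, by rw [geq]; exact h2.2,
        by rw [geq]; exact lt_of_le_of_lt (le_max_left _ _) h2.1⟩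
  have gmono : ∀ {j i : Ordinal}, j < i → i ≤ κ.ord → g j < g i := by
    intro j i hj hi
    calc g j ≤ Ordinal.bsup i fun j _ => g j := Ordinal.le_bsup _ j hj
      _ ≤ max ξ (Ordinal.bsup i fun j _ => g j) := le_max_right _ _
      _ < g i := by rw [geq]; exact (hnext _ (key i hi).1).1
  set β := Ordinal.bsup κ.ord (fun j _ => g j) with hβ
  have hξβ : ξ < β :=
    lt_of_lt_of_le (key 0 hlim.pos.le).2.2 (Ordinal.le_bsup _ 0 hlim.pos)
  have hβα : β < α := by
    apply Ordinal.bsup_lt_ord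
    · rw [Cardinal.card_ord]; exact hcof
    · exact fun j hj => (key j hj.le).2.1
  have hlp : ∀ γ < β, ∃ x, γ < x ∧ x < α ∧ x < next x ∧ next x < β := by
    intro γ hγ
    obtain ⟨j, hj, hγj⟩ := (Ordinal.lt_bsup _).1 hγ
    have hj1 : Order.succ j < κ.ord := hlim.succ_lt hj
    have hj2 : Order.succ (Order.succ j) < κ.ord := hlim.succ_lt hj1
    have hM := (key (Order.succ j) hj1.le).1
    refine ⟨max ξ (Ordinal.bsup (Order.succ j) fun j _ => g j), ?_, hM, (hnext _ hM).1, ?_⟩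
    · exact lt_of_lt_of_le hγj
        (le_trans (Ordinal.le_bsup _ j (Order.lt_succ j)) (le_max_right _ _))
    · rw [← geq]
      exact lt_of_lt_of_le (gmono (Order.lt_succ _) hj2.le) (Ordinal.le_bsup _ _ hj2)
  have hblsub : Ordinal.blsub κ.ord (fun j _ => g j) = β := by
    refine le_antisymm (Ordinal.blsub_le fun j hj => ?_) (Ordinal.bsup_le_blsub _)
    exact lt_of_lt_of_le (gmono (Order.lt_succ j) (hlim.succ_lt hj).le)
      (Ordinal.le_bsup _ _ (hlim.succ_lt hj))
  have hcofβ : β.cof = κ := by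
    refine le_antisymm ?_ ?_
    · calc β.cof = (Ordinal.blsub κ.ord (fun j _ => g j)).cof := by rw [hblsub]
        _ ≤ κ.ord.card := Ordinal.cof_blsub_le _
        _ = κ := Cardinal.card_ord κ
    · by_contra hcon
      push_neg at hcon
      obtain ⟨ι, f0, hf0, hmk⟩ := Ordinal.exists_lsub_cof β
      choose J hJlt hJ using fun i : ι =>
        (Ordinal.lt_bsup (fun j _ => g j)).1 (hf0 ▸ Ordinal.lt_lsub f0 i)
      have hJb : (⨆ i, Order.succ (J i)) < κ.ord := by
        apply Ordinal.iSup_lt_ord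
        · rw [hmk, hκ.cof_eq]; exact hcon
        · exact fun i => hlim.succ_lt (hJlt i)
      have hle : ∀ i : ι, J i < ⨆ i, Order.succ (J i) := fun i =>
        lt_of_lt_of_le (Order.lt_succ _)
          (le_ciSup ⟨κ.ord, fun x ⟨i, hi⟩ => hi ▸ (hlim.succ_lt (hJlt i)).le⟩ i)
      have h1 : β ≤ g (⨆ i, Order.succ (J i)) := by
        rw [← hf0]
        exact Ordinal.lsub_le fun i => lt_trans (hJ i) (gmono (hle i) hJb.le)
      have h2 : g (⨆ i, Order.succ (J i)) < β :=
        lt_of_lt_of_le (gmono (Order.lt_succ _) (hlim.succ_lt hJb).le)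
          (Ordinal.le_bsup _ _ (hlim.succ_lt hJb))
      exact absurd (lt_of_le_of_lt h1 h2) (lt_irrefl β)
  exact ⟨β, hξβ, hβα, hcofβ, hlp⟩

/-- In an ordinal `α` of cofinality `> κ`, above any `ξ < α` there is a point of
cofinality `κ` lying in both clubs `C`, `E`, which is moreover a limit of points of `C`. -/
lemma club_inter_point {κ : Cardinal.{u}} (hκ : κ.IsRegular) {C E : Set Ordinal.{u}}
    {α ξ : Ordinal.{u}} (hC : IsClubIn C α) (hE : IsClubIn E α)
    (hcof : κ < α.cof) (hξ : ξ < α) :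
    ∃ β, ξ < β ∧ β < α ∧ β.cof = κ ∧ β ∈ C ∧ β ∈ E ∧
      ∀ γ < β, ∃ δ ∈ C, γ < δ ∧ δ < β := by
  classical
  have hαlim : Order.IsSuccLimit α := Ordinal.aleph0_le_cof.1 (le_of_lt (lt_of_le_of_lt hκ.aleph0_le hcof))
  have hCn : ∀ x < α, ∃ δ, δ ∈ C ∧ x < δ ∧ δ < α := by
    intro x hx
    obtain ⟨δ, hδC, hδ⟩ := hC.2.1 (Order.succ x) (hαlim.succ_lt hx)
    exact ⟨δ, hδC, lt_of_lt_of_le (Order.lt_succ x) hδ, hC.1 hδC⟩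
  have hEn : ∀ x < α, ∃ δ, δ ∈ E ∧ x < δ ∧ δ < α := by
    intro x hx
    obtain ⟨δ, hδE, hδ⟩ := hE.2.1 (Order.succ x) (hαlim.succ_lt hx)
    exact ⟨δ, hδE, lt_of_lt_of_le (Order.lt_succ x) hδ, hE.1 hδE⟩
  set nC : Ordinal → Ordinal := fun x => if h : ∃ δ, δ ∈ C ∧ x < δ ∧ δ < α then h.choose else 0
    with hnCdef
  have hnC : ∀ x < α, nC x ∈ C ∧ x < nC x ∧ nC x < α := by
    intro x hx
    have h := hCn x hx
    simp only [hnCdef, dif_pos h]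
    exact h.choose_spec
  set nE : Ordinal → Ordinal := fun x => if h : ∃ δ, δ ∈ E ∧ x < δ ∧ δ < α then h.choose else 0
    with hnEdef
  have hnE : ∀ x < α, nE x ∈ E ∧ x < nE x ∧ nE x < α := by
    intro x hx
    have h := hEn x hx
    simp only [hnEdef, dif_pos h]
    exact h.choose_spec
  have hnext : ∀ x < α, x < nE (nC x) ∧ nE (nC x) < α := by
    intro x hx
    obtain ⟨_, h1, h2⟩ := hnC x hx
    obtain ⟨_, h3, h4⟩ := hnE _ h2
    exact ⟨lt_trans h1 h3, h4⟩
  obtain ⟨β, h1, h2, h3, h4⟩ := exists_cof_point hκ hcof hξ (fun x => nE (nC x)) hnext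
  have hCl : ∀ γ < β, ∃ δ ∈ C, γ < δ ∧ δ < β := by
    intro γ hγ
    obtain ⟨x, hx1, hx2, _, hx4⟩ := h4 γ hγ
    obtain ⟨hmem, hlt, hltα⟩ := hnC x hx2
    exact ⟨nC x, hmem, lt_trans hx1 hlt, lt_trans (hnE _ hltα).2.1 hx4⟩
  have hEl : ∀ γ < β, ∃ δ ∈ E, γ < δ ∧ δ < β := by
    intro γ hγ
    obtain ⟨x, hx1, hx2, hx3, hx4⟩ := h4 γ hγ
    exact ⟨nE (nC x), (hnE (nC x) (hnC x hx2).2.2).1, lt_trans hx1 hx3, hx4⟩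
  have hβpos : 0 < β := lt_of_le_of_lt (zero_le : 0 ≤ ξ) h1
  exact ⟨β, h1, h2, h3, hC.2.2 β h2 hβpos hCl, hE.2.2 β h2 hβpos hEl, hCl⟩

/-- Any ordinal of infinite cofinality has a club given as the image of `Iio α.cof.ord`. -/
lemma exists_small_club {α : Ordinal.{u}} (h : Cardinal.aleph0 ≤ α.cof) :
    ∃ N : Ordinal.{u} → Ordinal.{u}, IsClubIn (N '' Set.Iio α.cof.ord) α := by
  classical
  obtain ⟨ι, f, hlsub, hmk⟩ := Ordinal.exists_lsub_cof α
  have hαlim : Order.IsSuccLimit α := Ordinal.aleph0_le_cof.1 h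
  have hνlim : Order.IsSuccLimit α.cof.ord := Cardinal.isSuccLimit_ord (by rwa [← Cardinal.card_ord α.cof, Cardinal.card_ord])
  have hmk2 : #ι = #(α.cof.ord.ToType) := by rw [Cardinal.mk_toType, Cardinal.card_ord, hmk]
  obtain ⟨E⟩ := Cardinal.eq.1 hmk2
  set f' : Ordinal → Ordinal := fun j =>
    if hj : j < α.cof.ord then f (E.symm ((Ordinal.ToType.mk (o := α.cof.ord)) ⟨j, hj⟩)) else 0
    with hf'
  have hf'lt : ∀ j, f' j < α := by
    intro j
    simp only [hf']
    split
    · exact lt_of_lt_of_le (Ordinal.lt_lsub f _) (le_of_eq hlsub)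
    · exact hαlim.pos
  have hf'cof : ∀ x < α, ∃ j < α.cof.ord, x ≤ f' j := by
    intro x hx
    obtain ⟨i, hi⟩ := Ordinal.lt_lsub_iff.1 (by rw [hlsub]; exact hx)
    set t := (Ordinal.ToType.mk (o := α.cof.ord)).symm (E i) with ht
    refine ⟨t.1, t.2, ?_⟩
    have heq : f' t.1 = f i := by
      have h1 : f' t.1 = f (E.symm ((Ordinal.ToType.mk (o := α.cof.ord)) t)) := by
        simp only [hf']
        rw [dif_pos (show (t : Ordinal) < α.cof.ord from t.2)]
      rw [h1, ht]
      simp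
    rw [heq]; exact hi
  set N : Ordinal → Ordinal := fun i => Ordinal.bsup.{u,u} i (fun j _ => Order.succ (f' j))
    with hN
  have hmono : ∀ {i i' : Ordinal}, i ≤ i' → N i ≤ N i' := fun h' =>
    Ordinal.bsup_le fun j hj => Ordinal.le_bsup _ j (lt_of_lt_of_le hj h')
  have hNlt : ∀ i < α.cof.ord, N i < α := by
    intro i hi
    apply Ordinal.bsup_lt_ord (Cardinal.lt_ord.1 hi)
    exact fun j _ => hαlim.succ_lt (hf'lt j)
  refine ⟨N, ?_, ?_, ?_⟩
  · rintro x ⟨i, hi, rfl⟩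
    exact hNlt i hi
  · intro x hx
    obtain ⟨j, hj, hle⟩ := hf'cof x hx
    refine ⟨N (Order.succ j), ⟨Order.succ j, hνlim.succ_lt hj, rfl⟩, ?_⟩
    exact le_trans hle (le_trans (Order.lt_succ _).le (Ordinal.le_bsup _ j (Order.lt_succ j)))
  · intro β hβ hβpos hlp
    have hsne : {i | i < α.cof.ord ∧ β ≤ N i}.Nonempty := by
      obtain ⟨j, hj, hle⟩ := hf'cof β hβ
      exact ⟨Order.succ j, hνlim.succ_lt hj,
        le_trans hle (le_trans (Order.lt_succ _).le (Ordinal.le_bsup _ j (Order.lt_succ j)))⟩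
    set i₀ := sInf {i | i < α.cof.ord ∧ β ≤ N i} with hi₀def
    have hi₀ := csInf_mem hsne
    have hmin : ∀ i, i < i₀ → i < α.cof.ord → N i < β := fun i hi hi2 =>
      lt_of_not_ge fun hcon => (notMem_of_lt_csInf hi (OrderBot.bddBelow _)) ⟨hi2, hcon⟩
    have hNi₀ : N i₀ ≤ β := by
      rcases Ordinal.zero_or_succ_or_isSuccLimit i₀ with h0 | ⟨a, ha⟩ | hl
      · rw [h0]
        exact le_trans (le_of_eq (Ordinal.bsup_zero _)) (zero_le : 0 ≤ β)
      · replace ha := ha.symm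
        exfalso
        have hai₀ : a < i₀ := by rw [ha]; exact Order.lt_succ a
        have ha1 : a < α.cof.ord := lt_trans hai₀ hi₀.1
        have haβ : N a < β := hmin a hai₀ ha1
        obtain ⟨δ, hδe, hγδ, hδβ⟩ := hlp (N a) haβ
        obtain ⟨i, hiio, rfl⟩ := hδe
        have hii₀ : i < i₀ := by
          by_contra hcon
          push_neg at hcon
          exact absurd hδβ (not_lt.2 (le_trans hi₀.2 (hmono hcon)))
        have hia : i ≤ a := by
          rw [ha] at hii₀
          exact Order.lt_succ_iff.1 hii₀
        exact absurd hγδ (not_lt.2 (hmono hia))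
      · refine Ordinal.bsup_le fun j hj => ?_
        exact le_trans (Ordinal.le_bsup _ j (Order.lt_succ j))
          (hmin _ (hl.succ_lt hj) (lt_trans (hl.succ_lt hj) hi₀.1)).le
    exact ⟨i₀, hi₀.1, le_antisymm hNi₀ hi₀.2⟩

/-- Strong non-reflection at cofinality `κ` implies strong non-reflection at any regular
`κ*` with `κ < κ* < λ`. -/
theorem snr_mono (κ κs lam μ : Cardinal)
    (hκ : κ.IsRegular) (hκs : κs.IsRegular) (hlam : lam.IsRegular) (hμ : μ.IsRegular)
    (hκlam : κ < lam) (hlamμ : lam < μ) (hunc : Cardinal.aleph0 < lam)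
    (hκκs : κ < κs) (hκslam : κs < lam)
    (hsnr : Snr μ lam κ) : Snr μ lam κs := by
  classical
  obtain ⟨F, hFb, hFc⟩ := hsnr
  set A : Ordinal → Set Ordinal := fun α =>
    {γ | ∃ e : Set Ordinal, IsClubIn e α ∧
      γ = sSup ((fun β => Order.succ (F β)) '' (e ∩ Tset μ κ))} with hA
  refine ⟨fun α => sInf (A α), ?_, ?_⟩
  · -- boundedness
    rintro α ⟨hαμ, hαcof⟩
    have hcof : Cardinal.aleph0 ≤ α.cof := by rw [hαcof]; exact hκs.aleph0_le
    obtain ⟨N, hNclub⟩ := exists_small_club hcof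
    have hmem : sSup ((fun β => Order.succ (F β)) '' (N '' Set.Iio α.cof.ord ∩ Tset μ κ)) ∈ A α :=
      ⟨_, hNclub, rfl⟩
    have hord : Order.IsSuccLimit lam.ord := Cardinal.isSuccLimit_ord hlam.aleph0_le
    have hbd : Ordinal.bsup α.cof.ord
        (fun j _ => if N j ∈ Tset μ κ then Order.succ (F (N j)) else 0) < lam.ord := by
      apply Ordinal.bsup_lt_ord
      · rw [hαcof, Cardinal.card_ord, hlam.cof_eq]; exact hκslam
      · intro j hj
        split
        · exact hord.succ_lt (hFb _ ‹_›)
        · exact hord.pos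
    refine lt_of_le_of_lt (csInf_le' hmem) (lt_of_le_of_lt ?_ hbd)
    apply csSup_le'
    rintro y ⟨b, ⟨⟨j, hj, rfl⟩, hbT⟩, rfl⟩
    calc Order.succ (F (N j))
        = (if N j ∈ Tset μ κ then Order.succ (F (N j)) else 0) := (if_pos hbT).symm
      _ ≤ _ := Ordinal.le_bsup _ j hj
  · -- strict monotonicity on a club
    rintro α₀ ⟨hα₀μ, hα₀cof⟩
    obtain ⟨C, hC, hmono⟩ := hFc α₀ ⟨hα₀μ, hα₀cof⟩
    have hlamcof : Cardinal.aleph0 < α₀.cof := by rw [hα₀cof]; exact hunc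
    set D : Set Ordinal := {β | β < α₀ ∧ 0 < β ∧ ∀ γ < β, ∃ δ ∈ C, γ < δ ∧ δ < β} with hD
    have hDclub : IsClubIn D α₀ := by
      refine ⟨fun β hβ => hβ.1, ?_, ?_⟩
      · intro ξ hξ
        obtain ⟨β, h1, h2, _, _, _, hCl⟩ :=
          club_inter_point Cardinal.isRegular_aleph0 hC (clubIio α₀) hlamcof hξ
        exact ⟨β, ⟨h2, lt_of_le_of_lt (zero_le : 0 ≤ ξ) h1, hCl⟩, h1.le⟩
      · intro β hβ hβpos hlp
        refine ⟨hβ, hβpos, fun γ hγ => ?_⟩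
        obtain ⟨d, hdD, hγd, hdβ⟩ := hlp γ hγ
        obtain ⟨δ, hδC, hγδ, hδd⟩ := hdD.2.2 γ hγd
        exact ⟨δ, hδC, hγδ, lt_trans hδd hdβ⟩
    have hsub : ∀ {a : Ordinal}, a ∈ D → IsClubIn (C ∩ Set.Iio a) a := by
      rintro a ⟨haα₀, hapos, halp⟩
      refine ⟨fun x hx => hx.2, ?_, ?_⟩
      · intro ξ hξ
        obtain ⟨δ, hδC, hξδ, hδa⟩ := halp ξ hξ
        exact ⟨δ, ⟨hδC, hδa⟩, hξδ.le⟩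
      · intro β hβ hβpos hlp
        refine ⟨hC.2.2 β (lt_trans hβ haα₀) hβpos fun γ hγ => ?_, hβ⟩
        obtain ⟨δ, hδ, h1, h2⟩ := hlp γ hγ
        exact ⟨δ, hδ.1, h1, h2⟩
    refine ⟨D, hDclub, ?_⟩
    rintro α ⟨hαD, hαμ, hαcof⟩ α' ⟨hα'D, hα'μ, hα'cof⟩ hlt
    have hcofα' : κ < α'.cof := by rw [hα'cof]; exact hκκs
    obtain ⟨βs, hβs1, hβs2, hβs3, hβs4, -, -⟩ :=
      club_inter_point hκ (hsub hα'D) (clubIio α') hcofα' hlt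
    have hβsT : βs ∈ Tset μ κ := ⟨lt_trans hβs2 (lt_trans hα'D.1 hα₀μ), hβs3⟩
    have step1 : sInf (A α) ≤ F βs := by
      have hmem : sSup ((fun β => Order.succ (F β)) '' ((C ∩ Set.Iio α) ∩ Tset μ κ)) ∈ A α :=
        ⟨_, hsub hαD, rfl⟩
      refine le_trans (csInf_le' hmem) (csSup_le' ?_)
      rintro y ⟨b, ⟨⟨hbC, hbα⟩, hbT⟩, rfl⟩
      rw [Order.succ_le_iff]
      exact hmono ⟨hbC, hbT⟩ ⟨hβs4.1, hβsT⟩ (lt_trans hbα hβs1)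
    have hne : (A α').Nonempty := ⟨_, Set.Iio α', clubIio α', rfl⟩
    obtain ⟨e, he, heq⟩ := csInf_mem hne
    have step2 : F βs < sInf (A α') := by
      rw [heq]
      obtain ⟨β, hβ1, hβ2, hβ3, hβe, hβCE, -⟩ :=
        club_inter_point hκ he (hsub hα'D) hcofα' hβs2
      have hβT : β ∈ Tset μ κ := ⟨lt_trans hβ2 (lt_trans hα'D.1 hα₀μ), hβ3⟩
      have hFlt : F βs < F β := hmono ⟨hβs4.1, hβsT⟩ ⟨hβCE.1, hβT⟩ hβ1
      refine lt_of_lt_of_le (lt_of_lt_of_le hFlt (Order.lt_succ _).le) (le_csSup ?_ ?_)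
      · refine ⟨lam.ord, ?_⟩
        rintro y ⟨b, ⟨-, hbT⟩, rfl⟩
        exact ((Cardinal.isSuccLimit_ord hlam.aleph0_le).succ_lt (hFb _ hbT)).le
      · exact ⟨β, ⟨hβe, hβT⟩, rfl⟩
    exact lt_of_le_of_lt step1 step2
end

section
/- Let κ < λ < μ < ν be regular cardinals with λ uncountable. If Ref(ν, μ, λ) and Ref(ν, λ, κ) hold, then Ref(ν, μ, κ) holds. That is, if every stationary subset of T^ν_λ has a stationary initial segment at some point of T^ν_μ and every stationary subset of T^ν_κ has a stationary initial segment at some point of T^ν_λ, then every stationary subset of T^ν_κ has a stationary initial segment at some point of T^ν_μ. -/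
open Cardinal Ordinal Set

-- key sequence lemma: common limit point of two "unbounded" sets
lemma exists_common_limit (α γ : Ordinal) (hα : Cardinal.aleph0 < α.cof) (hγ : γ < α)
    (C D : Set Ordinal)
    (hC : ∀ x < α, ∃ y ∈ C, x < y ∧ y < α)
    (hD : ∀ x < α, ∃ y ∈ D, x < y ∧ y < α) :
    ∃ β, γ < β ∧ β < α ∧ (∀ x < β, ∃ δ ∈ C, x < δ ∧ δ < β) ∧
      (∀ x < β, ∃ δ ∈ D, x < δ ∧ δ < β) := by
  have hC' : ∀ x : Ordinal, ∃ y, x < α → (y ∈ C ∧ x < y ∧ y < α) := by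
    intro x
    by_cases h : x < α
    · obtain ⟨y, hy1, hy2, hy3⟩ := hC x h
      exact ⟨y, fun _ => ⟨hy1, hy2, hy3⟩⟩
    · exact ⟨0, fun h' => absurd h' h⟩
  have hD' : ∀ x : Ordinal, ∃ y, x < α → (y ∈ D ∧ x < y ∧ y < α) := by
    intro x
    by_cases h : x < α
    · obtain ⟨y, hy1, hy2, hy3⟩ := hD x h
      exact ⟨y, fun _ => ⟨hy1, hy2, hy3⟩⟩
    · exact ⟨0, fun h' => absurd h' h⟩
  choose c hc using hC'
  choose d hd using hD'
  let f : ℕ → Ordinal := fun n => Nat.rec γ (fun _ p => d (c p)) n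
  have hf0 : f 0 = γ := rfl
  have hfs : ∀ n, f (n + 1) = d (c (f n)) := fun n => rfl
  have key : ∀ n, f n < α ∧ c (f n) ∈ C ∧ f n < c (f n) ∧ c (f n) < α ∧
      d (c (f n)) ∈ D ∧ c (f n) < d (c (f n)) ∧ d (c (f n)) < α := by
    intro n
    induction n with
    | zero =>
      have h1 := hc γ hγ
      have h2 := hd (c γ) h1.2.2
      exact ⟨hγ, h1.1, h1.2.1, h1.2.2, h2.1, h2.2.1, h2.2.2⟩
    | succ n ih =>
      have hfn : f (n+1) < α := by rw [hfs]; exact ih.2.2.2.2.2.2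
      have h1 := hc (f (n+1)) hfn
      have h2 := hd (c (f (n+1))) h1.2.2
      exact ⟨hfn, h1.1, h1.2.1, h1.2.2, h2.1, h2.2.1, h2.2.2⟩
  have hmono : ∀ n, f n < f (n + 1) := by
    intro n
    rw [hfs]
    exact (key n).2.2.1.trans (key n).2.2.2.2.2.1
  set β := ⨆ n, f n with hβ
  have hbdd : BddAbove (Set.range f) := Ordinal.bddAbove_range f
  have hle : ∀ n, f n ≤ β := fun n => le_ciSup hbdd n
  have hβα : β < α := by
    rw [hβ]
    apply Ordinal.iSup_lt_ord_lift _ (fun n => (key n).1)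
    simpa using hα
  have hγβ : γ < β := lt_of_lt_of_le (hf0 ▸ hmono 0) (hle 1)
  refine ⟨β, hγβ, hβα, ?_, ?_⟩
  · intro x hx
    obtain ⟨n, hn⟩ := (lt_ciSup_iff hbdd).mp hx
    exact ⟨c (f n), (key n).2.1, hn.trans (key n).2.2.1,
      lt_of_lt_of_le ((hfs n ▸ (key n).2.2.2.2.2.1 : c (f n) < f (n+1))) (hle (n+1))⟩
  · intro x hx
    obtain ⟨n, hn⟩ := (lt_ciSup_iff hbdd).mp hx
    refine ⟨f (n+1), ?_, hn.trans (hmono n), lt_of_lt_of_le (hmono (n+1)) (hle (n+2))⟩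
    rw [hfs]; exact (key n).2.2.2.2.1

lemma club_strict_unbounded {C : Set Ordinal} {α : Ordinal} (hC : IsClubIn C α)
    (hlim : Order.IsSuccLimit α) : ∀ x < α, ∃ y ∈ C, x < y ∧ y < α := by
  intro x hx
  obtain ⟨y, hy1, hy2⟩ := hC.2.1 (x + 1) (hlim.succ_lt hx)
  exact ⟨y, hy1, lt_of_lt_of_le (lt_add_one x) hy2, hC.1 hy1⟩

lemma isLimit_of_aleph0_lt_cof {α : Ordinal} (hα : Cardinal.aleph0 < α.cof) : Order.IsSuccLimit α :=
  Ordinal.aleph0_le_cof.mp hα.le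

lemma inter_clubs {C D : Set Ordinal} {α : Ordinal} (hα : Cardinal.aleph0 < α.cof)
    (hC : IsClubIn C α) (hD : IsClubIn D α) : IsClubIn (C ∩ D) α := by
  have hlim := isLimit_of_aleph0_lt_cof hα
  refine ⟨fun x hx => hC.1 hx.1, ?_, ?_⟩
  · intro γ hγ
    obtain ⟨β, hγβ, hβα, hCl, hDl⟩ := exists_common_limit α γ hα hγ C D
      (club_strict_unbounded hC hlim) (club_strict_unbounded hD hlim)
    have h0 : 0 < β := (zero_le (a := γ)).trans_lt hγβ
    exact ⟨β, ⟨hC.2.2 β hβα h0 hCl, hD.2.2 β hβα h0 hDl⟩, hγβ.le⟩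
  · intro β hβα h0 hlp
    constructor
    · exact hC.2.2 β hβα h0 fun γ hγ => by
        obtain ⟨δ, hδ, h1, h2⟩ := hlp γ hγ; exact ⟨δ, hδ.1, h1, h2⟩
    · exact hD.2.2 β hβα h0 fun γ hγ => by
        obtain ⟨δ, hδ, h1, h2⟩ := hlp γ hγ; exact ⟨δ, hδ.2, h1, h2⟩

/-- The set of limit points of `C` below `α`. -/
def limpts (C : Set Ordinal) (α : Ordinal) : Set Ordinal :=
  {β | β < α ∧ ∀ x < β, ∃ δ ∈ C, x < δ ∧ δ < β}

lemma limpts_club {C : Set Ordinal} {α : Ordinal} (hα : Cardinal.aleph0 < α.cof)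
    (hC : IsClubIn C α) : IsClubIn (limpts C α) α := by
  have hlim := isLimit_of_aleph0_lt_cof hα
  refine ⟨fun x hx => hx.1, ?_, ?_⟩
  · intro γ hγ
    obtain ⟨β, hγβ, hβα, hCl, _⟩ := exists_common_limit α γ hα hγ C C
      (club_strict_unbounded hC hlim) (club_strict_unbounded hC hlim)
    exact ⟨β, ⟨hβα, hCl⟩, hγβ.le⟩
  · intro β hβα h0 hlp
    refine ⟨hβα, fun x hx => ?_⟩
    obtain ⟨β', hβ', hxβ', hβ'β⟩ := hlp x hx
    obtain ⟨δ, hδ, h1, h2⟩ := hβ'.2 x hxβ'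
    exact ⟨δ, hδ, h1, h2.trans hβ'β⟩

lemma club_restrict {C : Set Ordinal} {α β : Ordinal} (hC : IsClubIn C α) (hβα : β < α)
    (hlp : ∀ x < β, ∃ δ ∈ C, x < δ ∧ δ < β) : IsClubIn (C ∩ Set.Iio β) β := by
  refine ⟨fun x hx => hx.2, ?_, ?_⟩
  · intro γ hγ
    obtain ⟨δ, hδ, h1, h2⟩ := hlp γ hγ
    exact ⟨δ, ⟨hδ, h2⟩, h1.le⟩
  · intro z hzβ h0 hzl
    refine ⟨hC.2.2 z (hzβ.trans hβα) h0 fun γ hγ => ?_, hzβ⟩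
    obtain ⟨δ, hδ, h1, h2⟩ := hzl γ hγ
    exact ⟨δ, hδ.1, h1, h2⟩

lemma Ioo_club {γ β : Ordinal} (hγβ : γ < β) (hlim : Order.IsSuccLimit β) :
    IsClubIn (Set.Ioo γ β) β := by
  refine ⟨fun x hx => hx.2, ?_, ?_⟩
  · intro x hx
    refine ⟨max (γ + 1) x, ⟨lt_max_of_lt_left (lt_add_one γ), max_lt (hlim.succ_lt hγβ) hx⟩,
      le_max_right _ _⟩
  · intro z hzβ h0 hzl
    obtain ⟨δ, hδ, _, h2⟩ := hzl 0 h0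
    exact ⟨hδ.1.trans h2, hzβ⟩

/-- Transitivity of reflection in the middle coordinate:
`Ref(ν, μ, λ)` and `Ref(ν, λ, κ)` together imply `Ref(ν, μ, κ)`. -/
theorem ref_trans_middle (κ lam μ ν : Cardinal)
    (hκ : κ.IsRegular) (hlam : lam.IsRegular) (hμ : μ.IsRegular) (hν : ν.IsRegular)
    (hκlam : κ < lam) (hlamμ : lam < μ) (hμν : μ < ν) (hunc : Cardinal.aleph0 < lam)
    (h1 : Ref ν μ lam) (h2 : Ref ν lam κ) : Ref ν μ κ := by
  intro S hS hSstat
  have hℵν : Cardinal.aleph0 < ν.ord.cof := by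
    rw [hν.cof_eq]; exact hunc.trans (hlamμ.trans hμν)
  set B := {β | β ∈ Tset ν lam ∧ IsStatIn (S ∩ Set.Iio β) β} with hBdef
  by_cases hB : IsStatIn B ν.ord
  · obtain ⟨α, hαT, hαstat⟩ := h1 B (fun β hβ => hβ.1) hB
    refine ⟨α, hαT, ?_⟩
    intro C hC
    have hαcof : Cardinal.aleph0 < α.cof := by
      rw [hαT.2]; exact hunc.trans hlamμ
    obtain ⟨β, hβ1, hβ2⟩ := hαstat (limpts C α) (limpts_club hαcof hC)
    obtain ⟨y, hy1, hy2⟩ := hβ1.1.2 (C ∩ Set.Iio β) (club_restrict hC hβ1.2 hβ2.2)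
    exact ⟨y, ⟨hy1.1, Set.mem_Iio.mpr (lt_trans (Set.mem_Iio.mp hy2.2) (Set.mem_Iio.mp hβ1.2))⟩, hy2.1⟩
  · rw [IsStatIn] at hB; push_neg at hB
    obtain ⟨D, hD, hBD⟩ := hB
    have hSD : IsStatIn (S ∩ D) ν.ord := by
      intro C hC
      obtain ⟨x, hx1, hx2⟩ := hSstat (D ∩ C) (inter_clubs hℵν hD hC)
      exact ⟨x, ⟨hx1, hx2.1⟩, hx2.2⟩
    obtain ⟨β, hβT, hβstat⟩ := h2 (S ∩ D) (fun x hx => hS hx.1) hSD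
    have hβlim : Order.IsSuccLimit β := isLimit_of_aleph0_lt_cof (by rw [hβT.2]; exact hunc)
    have hβB : β ∈ B := by
      refine ⟨hβT, fun C hC => ?_⟩
      obtain ⟨x, hx1, hx2⟩ := hβstat C hC
      exact ⟨x, ⟨hx1.1.1, hx1.2⟩, hx2⟩
    have hβD : β ∈ D := by
      refine hD.2.2 β hβT.1 hβlim.pos fun γ hγ => ?_
      obtain ⟨x, hx1, hx2⟩ := hβstat (Set.Ioo γ β) (Ioo_club hγ hβlim)
      exact ⟨x, hx1.1.2, hx2.1, hx2.2⟩
    exact absurd (Set.eq_empty_iff_forall_notMem.mp hBD β ⟨hβB, hβD⟩) not_false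
end

section
/- Let κ < λ < μ < ν be regular cardinals with λ uncountable. If Ref(ν, μ, κ) and Ref(μ, λ, κ) hold, then Ref(ν, λ, κ) holds. That is, if every stationary subset of T^ν_κ has a stationary initial segment at some point of T^ν_μ, and every stationary subset of T^μ_κ has a stationary initial segment at some point of T^μ_λ, then every stationary subset of T^ν_κ has a stationary initial segment at some point of T^ν_λ. -/
open Cardinal Ordinal Set

/-- The image of a club under a normal cofinal map is a club. -/
lemma isClubIn_image {g : Ordinal → Ordinal} (hg : Order.IsNormal g) {b₀ β₀ : Ordinal}
    (hlt : ∀ c < b₀, g c < β₀) (hcof : ∀ x < β₀, ∃ c < b₀, x < g c)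
    {C : Set Ordinal} (hC : IsClubIn C b₀) : IsClubIn (g '' C) β₀ := by
  obtain ⟨hCsub, hCunb, hCcl⟩ := hC
  refine ⟨?_, ?_, ?_⟩
  · rintro x ⟨c, hc, rfl⟩
    exact hlt c (hCsub hc)
  · intro x hx
    obtain ⟨c, hc, hxc⟩ := hcof x hx
    obtain ⟨d, hdC, hcd⟩ := hCunb c hc
    exact ⟨g d, ⟨d, hdC, rfl⟩, (hxc.trans_le (hg.monotone hcd)).le⟩
  · intro β hβ hβ0 happ
    obtain ⟨c0, hc0, hβc0⟩ := hcof β hβ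
    have hA_ne : {d : Ordinal | β ≤ g d}.Nonempty := ⟨c0, hβc0.le⟩
    set b := sInf {d : Ordinal | β ≤ g d} with hbdef
    have hbA : β ≤ g b := csInf_mem hA_ne
    have hbb₀ : b < b₀ := lt_of_le_of_lt (csInf_le' hβc0.le) hc0
    have hmin : ∀ d < b, g d < β := fun d hd =>
      lt_of_not_ge fun h => notMem_of_lt_csInf' hd h
    rcases Ordinal.zero_or_succ_or_isSuccLimit b with hb0 | ⟨e, hbe⟩ | hblim
    · obtain ⟨δ, ⟨d, hdC, rfl⟩, _, hδβ⟩ := happ 0 hβ0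
      have : d < b := hg.strictMono.lt_iff_lt.1 (hδβ.trans_le hbA)
      rw [hb0] at this
      exact absurd this (by simp)
    · have heb : e < b := by rw [← hbe]; exact Order.lt_succ e
      obtain ⟨δ, ⟨d, hdC, rfl⟩, hgd1, hgd2⟩ := happ (g e) (hmin e heb)
      have hbd : b ≤ d := by
        rw [← hbe]; exact Order.succ_le_of_lt (hg.strictMono.lt_iff_lt.1 hgd1)
      exact absurd (hgd2.trans_le hbA) (not_lt.2 (hg.monotone hbd))
    · have hgbβ : g b = β :=
        le_antisymm ((hg.le_iff_forall_le hblim).2 fun d hd => (hmin d hd).le) hbA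
      have hbC : b ∈ C := by
        apply hCcl b hbb₀ hblim.pos
        intro c hc
        obtain ⟨δ, ⟨d, hdC, rfl⟩, h1, h2⟩ := happ (g c) (hgbβ ▸ hg.strictMono hc)
        exact ⟨d, hdC, hg.strictMono.lt_iff_lt.1 h1, hg.strictMono.lt_iff_lt.1 (hgbβ ▸ h2 : g d < g b)⟩
      exact ⟨b, hbC, hgbβ⟩

/-- The preimage of a club in `g b₀` under a normal map is a club in `b₀`,
provided `b₀` has uncountable cofinality. -/
lemma isClubIn_preimage {g : Ordinal → Ordinal} (hg : Order.IsNormal g) {b₀ : Ordinal}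
    (hb₀ : Order.IsSuccLimit b₀) (hcof : Cardinal.aleph0 < b₀.cof)
    {C : Set Ordinal} (hC : IsClubIn C (g b₀)) :
    IsClubIn {c | c < b₀ ∧ g c ∈ C} b₀ := by
  obtain ⟨hCsub, hCunb, hCcl⟩ := hC
  refine ⟨fun c hc => hc.1, ?_, ?_⟩
  · intro c₀ hc₀
    have step : ∀ c : {x : Ordinal // x < b₀}, ∃ c' : {x : Ordinal // x < b₀},
        c.1 < c'.1 ∧ ∃ δ ∈ C, g c.1 ≤ δ ∧ δ < g c'.1 := by
      rintro ⟨c, hc⟩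
      obtain ⟨δ, hδC, hgcδ⟩ := hCunb (g c) (hg.strictMono hc)
      obtain ⟨e, he, hδe⟩ := (hg.lt_iff_exists_lt hb₀).1 (hCsub hδC)
      refine ⟨⟨max e (Order.succ c), max_lt he (hb₀.succ_lt hc)⟩,
        (Order.lt_succ c).trans_le (le_max_right _ _), δ, hδC, hgcδ,
        hδe.trans_le (hg.monotone (le_max_left _ _))⟩
    choose stepf hstep1 hstep2 using step
    set seq : ℕ → {x : Ordinal // x < b₀} :=
      fun n => Nat.rec ⟨c₀, hc₀⟩ (fun _ p => stepf p) n with hseq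
    have hmono : ∀ n, (seq n).1 < (seq (n + 1)).1 := fun n => hstep1 (seq n)
    set c := ⨆ n, (seq n).1 with hcdef
    have hcb : c < b₀ :=
      Ordinal.iSup_lt_ord_lift (by simpa using hcof) fun n => (seq n).2
    have hlt_seq : ∀ n, (seq n).1 < c := fun n =>
      (hmono n).trans_le (Ordinal.le_iSup (fun n => (seq n).1) (n + 1))
    have hclim : Order.IsSuccLimit c := by
      refine Ordinal.isSuccLimit_iff.2 ⟨(zero_le.trans_lt (hlt_seq 0)).ne', Order.isSuccPrelimit_of_succ_lt fun a ha => ?_⟩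
      obtain ⟨n, han⟩ := Ordinal.lt_iSup_iff.1 ha
      exact (Order.succ_le_of_lt han).trans_lt (hlt_seq n)
    have hgcC : g c ∈ C := by
      apply hCcl (g c) (hg.strictMono hcb)
        (zero_le.trans_lt (hg.strictMono hclim.pos))
      intro γ hγ
      obtain ⟨e, hec, hγe⟩ := (hg.lt_iff_exists_lt hclim).1 hγ
      obtain ⟨n, hen⟩ := Ordinal.lt_iSup_iff.1 hec
      obtain ⟨δ, hδC, h1, h2⟩ := hstep2 (seq n)
      exact ⟨δ, hδC, hγe.trans_le ((hg.monotone hen.le).trans h1),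
        h2.trans_le (hg.monotone (hlt_seq (n + 1)).le)⟩
    exact ⟨c, ⟨hcb, hgcC⟩, Ordinal.le_iSup (fun n => (seq n).1) 0⟩
  · intro d hd hd0 happ
    have hdlim : Order.IsSuccLimit d := by
      refine Ordinal.isSuccLimit_iff.2 ⟨hd0.ne', Order.isSuccPrelimit_of_succ_lt fun a ha => ?_⟩
      obtain ⟨e, _, hae, hed⟩ := happ a ha
      exact (Order.succ_le_of_lt hae).trans_lt hed
    refine ⟨hd, ?_⟩
    apply hCcl (g d) (hg.strictMono hd)
      (zero_le.trans_lt (hg.strictMono hd0))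
    intro γ hγ
    obtain ⟨e, hed, hγe⟩ := (hg.lt_iff_exists_lt hdlim).1 hγ
    obtain ⟨e', ⟨_, hge'C⟩, hee', he'd⟩ := happ e hed
    exact ⟨g e', hge'C, hγe.trans_le (hg.monotone hee'.le), hg.strictMono he'd⟩

/-- Transitivity of reflection in the first coordinate:
`Ref(ν, μ, κ)` and `Ref(μ, λ, κ)` together imply `Ref(ν, λ, κ)`. -/
theorem ref_trans_first (κ lam μ ν : Cardinal)
    (hκ : κ.IsRegular) (hlam : lam.IsRegular) (hμ : μ.IsRegular) (hν : ν.IsRegular)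
    (hκlam : κ < lam) (hlamμ : lam < μ) (hμν : μ < ν) (hunc : Cardinal.aleph0 < lam)
    (h1 : Ref ν μ κ) (h2 : Ref μ lam κ) : Ref ν lam κ := by
  intro S hS hstat
  obtain ⟨α, ⟨hαν, hαcof⟩, hSα⟩ := h1 S hS hstat
  obtain ⟨f, hf⟩ := Ordinal.exists_fundamental_sequence α
  obtain ⟨F, hFval, hFout⟩ : ∃ F : Ordinal → Ordinal,
      (∀ c (h : c < α.cof.ord), F c = f c h) ∧
      (∀ c, ¬ c < α.cof.ord → F c = α + c) :=
    ⟨fun c => if h : c < α.cof.ord then f c h else α + c,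
      fun c h => dif_pos h, fun c h => dif_neg h⟩
  have hFlt : ∀ c (h : c < α.cof.ord), F c < α := fun c h => by
    rw [hFval c h]; exact hf.lt h
  have hFmono : StrictMono F := by
    intro c d hcd
    by_cases hc : c < α.cof.ord
    · by_cases hdlt : d < α.cof.ord
      · rw [hFval c hc, hFval d hdlt]; exact hf.strict_mono hc hdlt hcd
      · rw [hFval c hc, hFout d hdlt]
        exact lt_of_lt_of_le (hf.lt hc) (le_self_add)
    · have hdlt : ¬ d < α.cof.ord := fun h => hc (hcd.trans h)
      rw [hFout c hc, hFout d hdlt]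
      exact (add_lt_add_iff_left α).2 hcd
  obtain ⟨g, hgdef⟩ : ∃ g : Ordinal → Ordinal,
      ∀ b, g b = Ordinal.bsup b (fun c _ => Order.succ (F c)) := ⟨_, fun _ => rfl⟩
  have hgF : ∀ b, g b ≤ F b := fun b => by
    rw [hgdef]
    exact Ordinal.bsup_le fun c hc => Order.succ_le_of_lt (hFmono hc)
  have hgsucc : ∀ b, g (Order.succ b) = Order.succ (F b) := by
    intro b
    rw [hgdef]
    refine le_antisymm (Ordinal.bsup_le fun c hc => ?_)
      (Ordinal.le_bsup _ b (Order.lt_succ b))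
    exact Order.succ_le_succ (hFmono.monotone (Order.lt_succ_iff.1 hc))
  have hgstrict : StrictMono g := by
    intro b b' hbb'
    calc g b ≤ F b := hgF b
    _ < Order.succ (F b) := Order.lt_succ _
    _ = g (Order.succ b) := (hgsucc b).symm
    _ ≤ g b' := by
        rw [hgdef (Order.succ b), hgdef b']
        exact Ordinal.bsup_le fun c hc =>
          Ordinal.le_bsup _ c (hc.trans_le (Order.succ_le_of_lt hbb'))
  have hgnorm : Order.IsNormal g := by
    refine Order.isNormal_iff.2 ⟨hgstrict, ?_⟩
    intro o ho a hba
    rw [hgdef]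
    refine Ordinal.bsup_le fun c hc => ?_
    have h1 : g (Order.succ c) ≤ a := hba (Order.succ c) (ho.succ_lt hc)
    rwa [hgsucc c] at h1
  have hb₀ : Order.IsSuccLimit (μ.ord) := Cardinal.isSuccLimit_ord hμ.aleph0_le
  have hco : α.cof.ord = μ.ord := by rw [hαcof]
  have hglt : ∀ b < μ.ord, g b < α := fun b hb =>
    (hgF b).trans_lt (hFlt b (by rw [hco]; exact hb))
  have hgcof : ∀ x < α, ∃ c < μ.ord, x < g c := by
    intro x hx
    have hxb : x < Ordinal.blsub _ f := hf.blsub_eq.symm ▸ hx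
    obtain ⟨i, hi, hxi⟩ := Ordinal.lt_blsub_iff.1 hxb
    refine ⟨Order.succ i, hb₀.succ_lt (hco ▸ hi), ?_⟩
    rw [hgsucc i, hFval i hi]
    exact hxi.trans_lt (Order.lt_succ _)
  have hS'sub : {c | c < μ.ord ∧ g c ∈ S} ⊆ Tset μ κ := by
    rintro c ⟨hcμ, hcS⟩
    refine ⟨hcμ, ?_⟩
    have hκc : (g c).cof = κ := (hS hcS).2
    rcases Ordinal.zero_or_succ_or_isSuccLimit c with rfl | ⟨e, rfl⟩ | hclim
    · rw [show g 0 = 0 by rw [hgdef]; exact Ordinal.bsup_zero _, Ordinal.cof_zero] at hκc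
      exact absurd (hκ.aleph0_le.trans hκc.symm.le) (by simp [Cardinal.aleph0_ne_zero])
    · rw [hgsucc e, Ordinal.cof_succ] at hκc
      exact absurd (hκc ▸ hκ.aleph0_le) (by simp [Cardinal.one_lt_aleph0.not_ge])
    · rw [← Ordinal.cof_map_of_isNormal hgnorm hclim]; exact hκc
  have hS'stat : IsStatIn {c | c < μ.ord ∧ g c ∈ S} μ.ord := by
    intro C hC
    obtain ⟨x, ⟨hxS, _⟩, c, hcC, rfl⟩ := hSα _ (isClubIn_image hgnorm hglt hgcof hC)
    exact ⟨c, ⟨hC.1 hcC, hxS⟩, hcC⟩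
  obtain ⟨b, ⟨hbμ, hbcof⟩, hTstat⟩ := h2 _ hS'sub hS'stat
  have hblim : Order.IsSuccLimit b := Ordinal.aleph0_le_cof.1 (by rw [hbcof]; exact hlam.aleph0_le)
  refine ⟨g b, ⟨(hglt b hbμ).trans hαν, by rw [Ordinal.cof_map_of_isNormal hgnorm hblim, hbcof]⟩, ?_⟩
  intro C hC
  obtain ⟨c, ⟨⟨hcμ, hcS⟩, hcb⟩, _, hcC⟩ :=
    hTstat _ (isClubIn_preimage hgnorm hblim (by rw [hbcof]; exact hunc) hC)
  exact ⟨g c, ⟨hcS, hgstrict hcb⟩, hcC⟩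
end

section
/- Let κ < λ < μ be regular cardinals with λ uncountable, and let κ* be a regular cardinal with κ < κ* < λ. Then Snr(μ, λ, κ) and Ref(μ, λ, κ*) cannot both hold; in particular, Snr(ℵ₃, ℵ₂, ℵ₀) implies the failure of Ref(ℵ₃, ℵ₂, ℵ₁). -/
open Cardinal Ordinal Set

universe u

namespace SnrAux

/-- Transfinite iteration of a "next element" function: at stage `ξ`, apply `nxt` to the
supremum of all earlier stages. -/
noncomputable def iterSup (nxt : Ordinal.{u} → Ordinal.{u}) : Ordinal.{u} → Ordinal.{u} :=
  Ordinal.lt_wf.fix fun ξ ih => nxt (Ordinal.bsup ξ fun η hη => ih η hη)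

theorem iterSup_eq (nxt : Ordinal.{u} → Ordinal.{u}) (ξ : Ordinal.{u}) :
    iterSup nxt ξ = nxt (Ordinal.bsup ξ fun η _ => iterSup nxt η) := by
  rw [iterSup, WellFounded.fix_eq]

theorem iterSup_spec {nxt : Ordinal.{u} → Ordinal.{u}} {D : Set Ordinal.{u}} {α : Ordinal.{u}}
    (hnxt : ∀ δ < α, nxt δ ∈ D ∧ δ < nxt δ ∧ nxt δ < α) :
    ∀ ξ : Ordinal.{u}, ξ.card < α.cof →
      (Ordinal.bsup ξ fun η _ => iterSup nxt η) < α ∧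
      iterSup nxt ξ ∈ D ∧ iterSup nxt ξ < α ∧
      (Ordinal.bsup ξ fun η _ => iterSup nxt η) < iterSup nxt ξ := by
  intro ξ
  induction ξ using Ordinal.induction with
  | h ξ IH =>
    intro hcard
    have hb : (Ordinal.bsup ξ fun η _ => iterSup nxt η) < α := by
      apply Ordinal.bsup_lt_ord hcard
      intro η hη
      exact (IH η hη ((Ordinal.card_le_card hη.le).trans_lt hcard)).2.2.1
    obtain ⟨h1, h2, h3⟩ := hnxt _ hb
    rw [iterSup_eq]
    exact ⟨hb, h1, h3, h2⟩

theorem iterSup_strictMono {nxt : Ordinal.{u} → Ordinal.{u}} {D : Set Ordinal.{u}}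
    {α : Ordinal.{u}} (hnxt : ∀ δ < α, nxt δ ∈ D ∧ δ < nxt δ ∧ nxt δ < α)
    {η ξ : Ordinal.{u}} (hηξ : η < ξ) (hcard : ξ.card < α.cof) :
    iterSup nxt η < iterSup nxt ξ := by
  obtain ⟨-, -, -, h4⟩ := iterSup_spec hnxt ξ hcard
  exact (Ordinal.le_bsup (fun η (_ : η < ξ) => iterSup nxt η) η hηξ).trans_lt h4

/-- The cofinality of the supremum of a strictly increasing family indexed by a limit
ordinal `o` equals the cofinality of `o`. -/
theorem cof_bsup_eq {o : Ordinal.{u}} (ho : Order.IsSuccLimit o) {f : Ordinal.{u} → Ordinal.{u}}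
    (hf : ∀ {x y}, x < y → y < o → f x < f y) :
    (Ordinal.bsup o fun η _ => f η).cof = o.cof := by
  have hmono : ∀ {x y}, x ≤ y → y < o → f x ≤ f y := by
    intro x y hxy hy
    rcases hxy.lt_or_eq with h | h
    · exact (hf h hy).le
    · rw [h]
  have hblsub : (Ordinal.bsup o fun η _ => f η) = Ordinal.blsub o fun η _ => f η :=
    Ordinal.bsup_eq_blsub_of_lt_succ_limit ho fun a ha => hf (Order.lt_succ a) (ho.succ_lt ha)
  rw [hblsub]
  apply le_antisymm
  · obtain ⟨ι, p, hp, hcard⟩ := Ordinal.exists_lsub_cof o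
    have hpi : ∀ i, p i < o := fun i => hp ▸ Ordinal.lt_lsub p i
    have hlsub : Ordinal.lsub (fun i => f (p i)) = Ordinal.blsub o fun η _ => f η := by
      apply le_antisymm
      · exact Ordinal.lsub_le fun i => Ordinal.lt_blsub (fun η (_ : η < o) => f η) (p i) (hpi i)
      · refine Ordinal.blsub_le fun η hη => ?_
        obtain ⟨i, hi⟩ := Ordinal.lt_lsub_iff.1 (hp ▸ hη)
        exact (hmono hi (hpi i)).trans_lt (Ordinal.lt_lsub _ i)
    rw [← hlsub, ← hcard]
    exact Ordinal.cof_lsub_le _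
  · obtain ⟨ι, q, hq, hcard⟩ := Ordinal.exists_lsub_cof (Ordinal.blsub o fun η _ => f η)
    have hqi : ∀ i, ∃ η, q i < f η ∧ η < o := by
      intro i
      have : q i < Ordinal.blsub o fun η _ => f η := hq ▸ Ordinal.lt_lsub q i
      obtain ⟨η, hη, hle⟩ := Ordinal.lt_blsub_iff.1 this
      exact ⟨η + 1, hle.trans_lt (hf (Order.lt_succ η) (ho.succ_lt hη)), ho.succ_lt hη⟩
    set P : ι → Ordinal.{u} := fun i => sInf {η | q i < f η ∧ η < o} with hP
    have hPmem : ∀ i, q i < f (P i) ∧ P i < o := fun i => csInf_mem (hqi i)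
    have hlsub : Ordinal.lsub P = o := by
      apply le_antisymm
      · exact Ordinal.lsub_le fun i => (hPmem i).2
      · refine le_of_forall_lt fun η hη => ?_
        have h1 : f η < Ordinal.blsub o fun η _ => f η :=
          Ordinal.lt_blsub (fun η (_ : η < o) => f η) η hη
        obtain ⟨i, hi⟩ := Ordinal.lt_lsub_iff.1 (hq ▸ h1)
        have hηP : η < P i := by
          by_contra hcon
          push_neg at hcon
          exact absurd (hi.trans_lt (hPmem i).1) (not_lt.2 (hmono hcon hη))
        exact hηP.trans_le (Ordinal.lt_lsub P i).le
    calc o.cof = (Ordinal.lsub P).cof := by rw [hlsub]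
      _ ≤ #ι := Ordinal.cof_lsub_le _
      _ = _ := hcard



theorem isClubIn_Ioo {α δ : Ordinal.{u}} (hα : Order.IsSuccLimit α) (hδ : δ < α) :
    IsClubIn (Set.Ioo δ α) α := by
  refine ⟨fun x hx => hx.2, fun β hβ => ⟨(β ⊔ δ) + 1,
    ⟨(le_max_right β δ).trans_lt (Order.lt_succ _), hα.succ_lt (max_lt hβ hδ)⟩,
    (le_max_left β δ).trans (Order.lt_succ _).le⟩, ?_⟩
  intro β hβ hβ0 hlim
  obtain ⟨d, hd, -, hdβ⟩ := hlim 0 hβ0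
  exact ⟨hd.1.trans hdβ, hβ⟩

theorem isClubIn_iInter {α : Ordinal.{u}} {ι0 : Ordinal.{u}} (hι0 : 0 < ι0)
    (hcard : ℵ₀ ⊔ ι0.card < α.cof) {Cs : Ordinal.{u} → Set Ordinal.{u}}
    (hCs : ∀ i < ι0, IsClubIn (Cs i) α) :
    IsClubIn (⋂ i ∈ Set.Iio ι0, Cs i) α := by
  have hαcof : ℵ₀ < α.cof := (le_max_left _ _).trans_lt hcard
  have hcard' : ι0.card < α.cof := (le_max_right _ _).trans_lt hcard
  have hαlim : Order.IsSuccLimit α := aleph0_le_cof.1 hαcof.le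
  refine ⟨fun x hx => (hCs 0 hι0).1 (Set.mem_iInter₂.1 hx 0 hι0), ?_, ?_⟩
  · intro β hβ
    have hnext : ∀ i δ, ∃ γ, i < ι0 → δ < α → (γ ∈ Cs i ∧ δ < γ ∧ γ < α) := by
      intro i δ
      by_cases h : i < ι0 ∧ δ < α
      · obtain ⟨γ, hγ, hge⟩ := (hCs i h.1).2.1 (δ + 1) (hαlim.succ_lt h.2)
        exact ⟨γ, fun _ _ => ⟨hγ, (Order.lt_succ δ).trans_le hge, (hCs i h.1).1 hγ⟩⟩
      · exact ⟨0, fun h1 h2 => absurd ⟨h1, h2⟩ h⟩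
    choose nf hnf using hnext
    set t : ℕ → Ordinal.{u} :=
      fun n => Nat.rec (β + 1) (fun _ tn => (Ordinal.bsup ι0 fun i _ => nf i tn) ⊔ (tn + 1)) n
      with ht
    have htα : ∀ n, t n < α := by
      intro n; induction n with
      | zero => exact hαlim.succ_lt hβ
      | succ n ih =>
        exact max_lt (Ordinal.bsup_lt_ord hcard' fun i hi => (hnf i (t n) hi ih).2.2)
          (hαlim.succ_lt ih)
    have htmono : ∀ n, t n < t (n + 1) := fun n =>
      (Order.lt_succ (t n)).trans_le (le_max_right _ _)
    have hbdd : BddAbove (Set.range t) := ⟨α, by rintro x ⟨n, rfl⟩; exact (htα n).le⟩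
    set s : Ordinal.{u} := ⨆ n, t n with hs
    have hts : ∀ n, t n < s := fun n => (htmono n).trans_le (le_ciSup hbdd (n + 1))
    have hsα : s < α := by
      refine Ordinal.iSup_lt_ord_lift ?_ htα
      simpa using hαcof
    have hmem : ∀ i, i < ι0 → s ∈ Cs i := by
      intro i hi
      refine (hCs i hi).2.2 s hsα (lt_of_le_of_lt (zero_le (a := t 0)) (hts 0)) fun γ hγ => ?_
      obtain ⟨n, hn⟩ := (lt_ciSup_iff hbdd).1 hγ
      refine ⟨nf i (t n), (hnf i (t n) hi (htα n)).1, hn.trans (hnf i (t n) hi (htα n)).2.1, ?_⟩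
      exact lt_of_le_of_lt ((Ordinal.le_bsup _ i hi).trans (le_max_left _ _)) (hts (n + 1))
    exact ⟨s, Set.mem_iInter₂.2 hmem, ((Order.lt_succ β).trans (hts 0)).le⟩
  · intro β hβ h0 hlim
    refine Set.mem_iInter₂.2 fun i hi => (hCs i hi).2.2 β hβ h0 fun γ hγ => ?_
    obtain ⟨d, hd, h1, h2⟩ := hlim γ hγ
    exact ⟨d, Set.mem_iInter₂.1 hd i hi, h1, h2⟩

theorem IsClubIn.inter {α : Ordinal.{u}} (hαcof : ℵ₀ < α.cof) {C D : Set Ordinal.{u}}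
    (hC : IsClubIn C α) (hD : IsClubIn D α) : IsClubIn (C ∩ D) α := by
  have h2 : ℵ₀ ⊔ (2 : Ordinal.{u}).card < α.cof := by
    have : (2 : Ordinal.{u}).card = 2 := by norm_num
    rw [this, max_eq_left ((by norm_num : ((2:ℕ):Cardinal) = 2) ▸ (nat_lt_aleph0 2).le)]
    exact hαcof
  have key := isClubIn_iInter (by norm_num : (0:Ordinal.{u}) < 2) h2
    (Cs := fun i => if i = 0 then C else D) ?_
  · have : (⋂ i ∈ Set.Iio (2 : Ordinal.{u}), if i = 0 then C else D) = C ∩ D := by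
      apply Set.Subset.antisymm
      · intro x hx
        have h0 := Set.mem_iInter₂.1 hx 0 (by norm_num : (0:Ordinal.{u}) < 2)
        have h1 := Set.mem_iInter₂.1 hx 1 (by norm_num : (1:Ordinal.{u}) < 2)
        simp only [if_pos rfl, if_neg one_ne_zero] at h0 h1
        exact ⟨h0, h1⟩
      · intro x hx
        refine Set.mem_iInter₂.2 fun i _ => ?_
        by_cases h : i = 0 <;> simp [h, hx.1, hx.2]
    rwa [this] at key
  · intro i _
    by_cases h : i = 0 <;> simp [h, hC, hD]



/-- The set of limit points of `C` below `α`. -/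
def limitPts (C : Set Ordinal.{u}) (α : Ordinal.{u}) : Set Ordinal.{u} :=
  {β | β < α ∧ 0 < β ∧ ∀ γ < β, ∃ d ∈ C, γ < d ∧ d < β}

theorem limitPts_subset {C : Set Ordinal.{u}} {α : Ordinal.{u}} (hC : IsClubIn C α) :
    limitPts C α ⊆ C :=
  fun β hβ => hC.2.2 β hβ.1 hβ.2.1 hβ.2.2

theorem club_limit_above {α : Ordinal.{u}} {C : Set Ordinal.{u}} (hC : IsClubIn C α)
    {o : Ordinal.{u}} (ho : Order.IsSuccLimit o) (hcard : o.card < α.cof) {β : Ordinal.{u}} (hβ : β < α) :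
    ∃ s ∈ limitPts C α, β < s ∧ s.cof = o.cof := by
  have hℵ0 : ℵ₀ ≤ o.card := by
    have := Ordinal.card_le_card (Ordinal.omega0_le_of_isSuccLimit ho)
    rwa [Ordinal.card_omega0] at this
  have hαcof : ℵ₀ < α.cof := hℵ0.trans_lt hcard
  have hαlim : Order.IsSuccLimit α := aleph0_le_cof.1 hαcof.le
  have hnext : ∀ δ, ∃ γ, δ < α → (γ ∈ C ∧ β < γ ∧ δ < γ ∧ γ < α) := by
    intro δ
    by_cases hδ : δ < α
    · obtain ⟨γ, hγ, hge⟩ := hC.2.1 ((δ ⊔ β) + 1) (hαlim.succ_lt (max_lt hδ hβ))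
      have hlt : δ ⊔ β < γ := (Order.lt_succ _).trans_le hge
      exact ⟨γ, fun _ => ⟨hγ, (le_max_right δ β).trans_lt hlt,
        (le_max_left δ β).trans_lt hlt, hC.1 hγ⟩⟩
    · exact ⟨0, fun h => absurd h hδ⟩
  choose nxt hnxt using hnext
  have hnxt' : ∀ δ < α, nxt δ ∈ C ∧ δ < nxt δ ∧ nxt δ < α := fun δ hδ =>
    ⟨(hnxt δ hδ).1, (hnxt δ hδ).2.2.1, (hnxt δ hδ).2.2.2⟩
  have hvalid : ∀ ξ < o, ξ.card < α.cof := fun ξ hξ =>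
    (Ordinal.card_le_card hξ.le).trans_lt hcard
  set s := Ordinal.bsup o (fun η _ => iterSup nxt η) with hs
  have hsα : s < α :=
    Ordinal.bsup_lt_ord hcard fun η hη => (iterSup_spec hnxt' η (hvalid η hη)).2.2.1
  have hmem : ∀ η < o, iterSup nxt η < s := fun η hη =>
    (iterSup_strictMono hnxt' (Order.lt_succ η) (hvalid _ (ho.succ_lt hη))).trans_le
      (Ordinal.le_bsup _ (η + 1) (ho.succ_lt hη))
  have hβs : β < s := by
    have h0 := iterSup_spec hnxt' 0 (by simpa using hαcof.trans_le' aleph0_pos.le)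
    have hb0 : (Ordinal.bsup 0 fun η _ => iterSup nxt η) < α := h0.1
    have : β < iterSup nxt 0 := by
      rw [iterSup_eq]
      exact (hnxt _ hb0).2.1
    exact this.trans (hmem 0 ho.pos)
  have hscof : s.cof = o.cof :=
    cof_bsup_eq ho fun {x y} hxy hy => iterSup_strictMono hnxt' hxy (hvalid _ hy)
  refine ⟨s, ⟨hsα, lt_of_le_of_lt (zero_le (a := β)) hβs, fun γ hγ => ?_⟩, hβs, hscof⟩
  obtain ⟨η, hη, hγη⟩ := (Ordinal.lt_bsup _).1 hγ
  exact ⟨iterSup nxt η, (iterSup_spec hnxt' η (hvalid η hη)).2.1, hγη, hmem η hη⟩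

theorem isClubIn_limitPts {α : Ordinal.{u}} {C : Set Ordinal.{u}} (hαcof : ℵ₀ < α.cof)
    (hC : IsClubIn C α) : IsClubIn (limitPts C α) α := by
  refine ⟨fun x hx => hx.1, ?_, ?_⟩
  · intro β hβ
    obtain ⟨s, hs, hβs, -⟩ := club_limit_above hC isSuccLimit_omega0
      (by rwa [Ordinal.card_omega0]) hβ
    exact ⟨s, hs, hβs.le⟩
  · intro β hβ h0 hlim
    refine ⟨hβ, h0, fun γ hγ => ?_⟩
    obtain ⟨c', hc', h1, h2⟩ := hlim γ hγ
    obtain ⟨d, hd, h3, h4⟩ := hc'.2.2 γ h1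
    exact ⟨d, hd, h3, h4.trans h2⟩

theorem isClubIn_inter_Iio {α : Ordinal.{u}} {C : Set Ordinal.{u}} (hC : IsClubIn C α)
    {β : Ordinal.{u}} (hβ : β ∈ limitPts C α) : IsClubIn (C ∩ Set.Iio β) β := by
  refine ⟨fun x hx => hx.2, ?_, ?_⟩
  · intro x hx
    obtain ⟨d, hd, h1, h2⟩ := hβ.2.2 x hx
    exact ⟨d, ⟨hd, h2⟩, h1.le⟩
  · intro y hy h0 hlim
    refine ⟨hC.2.2 y (hy.trans hβ.1) h0 fun γ hγ => ?_, hy⟩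
    obtain ⟨d, hd, h1, h2⟩ := hlim γ hγ
    exact ⟨d, hd.1, h1, h2⟩

theorem isStatIn_Tset {μ c : Cardinal.{u}} (hμ : μ.IsRegular) (hc : c.IsRegular)
    (hlt : c < μ) : IsStatIn (Tset μ c) μ.ord := by
  intro C hC
  have h1 : (0 : Ordinal) < μ.ord := (isSuccLimit_ord hμ.1).pos
  obtain ⟨s, hs, -, hcof⟩ := club_limit_above hC (isSuccLimit_ord hc.1)
    (by rw [Cardinal.card_ord, hμ.cof_eq]; exact hlt) h1
  refine ⟨s, ⟨hs.1, ?_⟩, limitPts_subset hC hs⟩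
  rw [hcof, hc.cof_eq]



theorem main {κ κs lam μ : Cardinal.{u}} (hκ : κ.IsRegular) (hκs : κs.IsRegular)
    (hlam : lam.IsRegular) (hμ : μ.IsRegular) (hlamμ : lam < μ) (hunc : ℵ₀ < lam)
    (hκκs : κ < κs) (hκslam : κs < lam) :
    ¬ (Snr μ lam κ ∧ Ref μ lam κs) := by
  rintro ⟨⟨F, hF1, hF2⟩, hRef⟩
  have hκsordlim : Order.IsSuccLimit κs.ord := isSuccLimit_ord hκs.1
  have hκordlim : Order.IsSuccLimit κ.ord := isSuccLimit_ord hκ.1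
  -- Step 1: choose cofinal sequences in each point of cofinality κs
  have hev : ∀ β : Ordinal.{u}, ∃ e : Ordinal.{u} → Ordinal.{u}, β.cof = κs →
      ((∀ {x y}, x < y → y < κs.ord → e x < e y) ∧ (∀ ξ < κs.ord, e ξ < β) ∧
        ∀ x < β, ∃ ξ < κs.ord, x ≤ e ξ) := by
    intro β
    by_cases hβ : β.cof = κs
    · obtain ⟨f, hf⟩ := Ordinal.exists_fundamental_sequence β
      have hord : κs.ord = β.cof.ord := by rw [hβ]
      refine ⟨fun ξ => if h : ξ < β.cof.ord then f ξ h else 0, fun _ => ⟨?_, ?_, ?_⟩⟩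
      · intro x y hxy hy
        rw [hord] at hy
        dsimp only
        rw [dif_pos (hxy.trans hy), dif_pos hy]
        exact hf.2.1 _ _ hxy
      · intro ξ hξ
        rw [hord] at hξ
        dsimp only
        rw [dif_pos hξ]
        exact hf.2.2 ▸ Ordinal.lt_blsub _ ξ hξ
      · intro x hx
        rw [← hf.2.2] at hx
        obtain ⟨ξ, hξ, hle⟩ := Ordinal.lt_blsub_iff.1 hx
        exact ⟨ξ, hord ▸ hξ, by dsimp only; rw [dif_pos hξ]; exact hle⟩
    · exact ⟨fun _ => 0, fun h => absurd h hβ⟩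
  choose e he using hev
  set Γ : Ordinal.{u} → Ordinal.{u} → Ordinal.{u} :=
    fun β ξ => Ordinal.bsup ξ (fun η _ => e β η) with hΓdef
  set g : Ordinal.{u} → Ordinal.{u} :=
    fun β => Ordinal.bsup κs.ord (fun ξ _ => if ξ.cof = κ then F (Γ β ξ) + 1 else 0) with hgdef
  -- Step 2: Γ lands in Tset μ κ
  have hΓmem : ∀ β ∈ Tset μ κs, ∀ ξ, ξ < κs.ord → ξ.cof = κ →
      (Γ β ξ ∈ Tset μ κ ∧ Γ β ξ ≤ e β ξ) := by
    rintro β ⟨hβμ, hβcof⟩ ξ hξ hξκ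
    obtain ⟨he1, he2, he3⟩ := he β hβcof
    have hξlim : Order.IsSuccLimit ξ := aleph0_le_cof.1 (hξκ ▸ hκ.1)
    have hle : Γ β ξ ≤ e β ξ := Ordinal.bsup_le fun η hη => (he1 hη hξ).le
    have hcof : (Γ β ξ).cof = κ := by
      show (Ordinal.bsup ξ (fun η _ => e β η)).cof = κ
      rw [cof_bsup_eq hξlim (fun {x y} h1 h2 => he1 h1 (h2.trans hξ)), hξκ]
    exact ⟨⟨hle.trans_lt ((he2 ξ hξ).trans hβμ), hcof⟩, hle⟩
  -- Step 3: g is bounded by lam.ord on Tset μ κs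
  have hgA : ∀ β ∈ Tset μ κs, g β < lam.ord := by
    intro β hβ
    refine Ordinal.bsup_lt_ord (by rw [Cardinal.card_ord, hlam.cof_eq]; exact hκslam) ?_
    intro ξ hξ
    by_cases hξκ : ξ.cof = κ
    · rw [if_pos hξκ]
      exact (isSuccLimit_ord hlam.1).succ_lt (hF1 _ (hΓmem β hβ ξ hξ hξκ).1)
    · rw [if_neg hξκ]
      exact (isSuccLimit_ord hlam.1).pos
  -- Step 4: key claim B
  have hB : ∀ β ∈ Tset μ κs, ∀ C : Set Ordinal.{u}, IsClubIn C β → ∀ δ < β,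
      ∃ γ, γ ∈ C ∧ γ ∈ Tset μ κ ∧ δ < γ ∧ F γ < g β := by
    rintro β ⟨hβμ, hβcof⟩ C hC δ hδ
    obtain ⟨he1, he2, he3⟩ := he β hβcof
    have hβlim : Order.IsSuccLimit β := aleph0_le_cof.1 (hβcof ▸ hκs.1)
    have hstep : ∀ ζ, ∃ ξ, ζ < κs.ord →
        (ζ < ξ ∧ ξ < κs.ord ∧ ∃ d ∈ C, (e β ζ ⊔ δ) < d ∧ d ≤ e β ξ) := by
      intro ζ
      by_cases hζ : ζ < κs.ord
      · have h1 : e β ζ ⊔ δ < β := max_lt (he2 ζ hζ) hδ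
        obtain ⟨d, hdC, hdge⟩ := hC.2.1 ((e β ζ ⊔ δ) + 1) (hβlim.succ_lt h1)
        have hdβ : d < β := hC.1 hdC
        obtain ⟨ξ1, hξ1, hdξ1⟩ := he3 d hdβ
        have hsucc : (ξ1 ⊔ ζ) + 1 < κs.ord := hκsordlim.succ_lt (max_lt hξ1 hζ)
        exact ⟨(ξ1 ⊔ ζ) + 1, fun _ => ⟨(le_max_right ξ1 ζ).trans_lt (Order.lt_succ _), hsucc,
          d, hdC, (Order.lt_succ _).trans_le hdge,
          hdξ1.trans (he1 ((le_max_left ξ1 ζ).trans_lt (Order.lt_succ _)) hsucc).le⟩⟩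
      · exact ⟨0, fun h => absurd h hζ⟩
    choose nxt hnxt using hstep
    have hnxt' : ∀ ζ < κs.ord, nxt ζ ∈ (Set.univ : Set Ordinal.{u}) ∧ ζ < nxt ζ ∧
        nxt ζ < κs.ord :=
      fun ζ hζ => ⟨trivial, (hnxt ζ hζ).1, (hnxt ζ hζ).2.1⟩
    have hvalid : ∀ ξ : Ordinal.{u}, ξ ≤ κ.ord → ξ.card < κs.ord.cof := by
      intro ξ hξ
      rw [hκs.cof_eq]
      exact (((Ordinal.card_le_card hξ).trans_eq (Cardinal.card_ord κ))).trans_lt hκκs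
    have hξsκs : (Ordinal.bsup κ.ord fun i _ => iterSup nxt i) < κs.ord :=
      Ordinal.bsup_lt_ord (hvalid κ.ord le_rfl)
        fun i hi => (iterSup_spec hnxt' i (hvalid i hi.le)).2.2.1
    set ξs := Ordinal.bsup κ.ord (fun i _ => iterSup nxt i) with hξsdef
    have hhmono : ∀ {x y : Ordinal.{u}}, x < y → y ≤ κ.ord → iterSup nxt x < iterSup nxt y :=
      fun hxy hy => iterSup_strictMono hnxt' hxy (hvalid _ hy)
    have hhlt : ∀ i < κ.ord, iterSup nxt i < ξs := fun i hi =>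
      (hhmono (Order.lt_succ i) (hκordlim.succ_lt hi).le).trans_le
        (Ordinal.le_bsup _ (i + 1) (hκordlim.succ_lt hi))
    have hξscof : ξs.cof = κ := by
      rw [hξsdef, cof_bsup_eq hκordlim (fun {x y} h1 h2 => hhmono h1 h2.le), hκ.cof_eq]
    have hξslim : Order.IsSuccLimit ξs := aleph0_le_cof.1 (hξscof ▸ hκ.1)
    obtain ⟨hγT, hγe⟩ := hΓmem β ⟨hβμ, hβcof⟩ ξs hξsκs hξscof
    have hγβ : Γ β ξs < β := hγe.trans_lt (he2 ξs hξsκs)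
    -- for each i < κ.ord, the witness d between the sup level and `e β (h i)`
    have hd : ∀ i < κ.ord, ∃ d ∈ C,
        (e β (Ordinal.bsup i fun η _ => iterSup nxt η) ⊔ δ) < d ∧ d ≤ e β (iterSup nxt i) := by
      intro i hi
      have hbi : (Ordinal.bsup i fun η _ => iterSup nxt η) < κs.ord :=
        (iterSup_spec hnxt' i (hvalid i hi.le)).1
      have h2 := (hnxt _ hbi).2.2
      rwa [← iterSup_eq nxt i] at h2
    -- `e β · < Γ β ξs` for indices below ξs
    have heγ : ∀ η < ξs, e β η < Γ β ξs := by
      intro η hη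
      have hη1 : η + 1 < ξs := hξslim.succ_lt hη
      exact (he1 (Order.lt_succ η) (hη1.trans hξsκs)).trans_le
        (Ordinal.le_bsup (fun η (_ : η < ξs) => e β η) (η + 1) hη1)
    have hlimpt : ∀ x < Γ β ξs, ∃ d ∈ C, x < d ∧ d < Γ β ξs := by
      intro x hx
      obtain ⟨η, hη, hxη⟩ := (Ordinal.lt_bsup _).1 hx
      obtain ⟨i, hi, hηi⟩ := (Ordinal.lt_bsup _).1 hη
      have hi1 : i + 1 < κ.ord := hκordlim.succ_lt hi
      obtain ⟨d, hdC, hd1, hd2⟩ := hd (i + 1) hi1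
      have hb1κs : (Ordinal.bsup (i + 1) fun η _ => iterSup nxt η) < κs.ord :=
        (iterSup_spec hnxt' (i + 1) (hvalid _ hi1.le)).1
      have hηb1 : η < Ordinal.bsup (i + 1) fun η _ => iterSup nxt η :=
        hηi.trans_le (Ordinal.le_bsup _ i (Order.lt_succ i))
      have hxd : x < d :=
        hxη.trans ((he1 hηb1 hb1κs).trans_le ((le_max_left _ _).trans hd1.le))
      have hdγ : d < Γ β ξs := hd2.trans_lt (heγ _ (hhlt (i + 1) hi1))
      exact ⟨d, hdC, hxd, hdγ⟩
    have hδγ : δ < Γ β ξs := by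
      obtain ⟨d, hdC, hd1, hd2⟩ := hd 0 hκordlim.pos
      exact ((le_max_right _ δ).trans_lt hd1).trans_le
        (hd2.trans (heγ _ (hhlt 0 hκordlim.pos)).le)
    have hγC : Γ β ξs ∈ C :=
      hC.2.2 _ hγβ (lt_of_le_of_lt (zero_le (a := δ)) hδγ) hlimpt
    have hFγ : F (Γ β ξs) < g β := by
      have hle := Ordinal.le_bsup
        (fun ξ (_ : ξ < κs.ord) => if ξ.cof = κ then F (Γ β ξ) + 1 else 0) ξs hξsκs
      rw [if_pos hξscof] at hle
      calc F (Γ β ξs) < F (Γ β ξs) + 1 := Order.lt_succ _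
        _ ≤ g β := hle
    exact ⟨Γ β ξs, hγC, hγT, hδγ, hFγ⟩
  -- Step 5: a stationary set with bounded g
  have hD : ∃ i < lam.ord, IsStatIn {β | β ∈ Tset μ κs ∧ g β ≤ i} μ.ord := by
    by_contra hcon
    push_neg at hcon
    have hCs : ∀ i, ∃ Cl, i < lam.ord →
        (IsClubIn Cl μ.ord ∧ {β | β ∈ Tset μ κs ∧ g β ≤ i} ∩ Cl = ∅) := by
      intro i
      by_cases hi : i < lam.ord
      · have h1 := hcon i hi
        rw [IsStatIn] at h1
        push_neg at h1
        obtain ⟨Cl, hCl, hempty⟩ := h1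
        exact ⟨Cl, fun _ => ⟨hCl, hempty⟩⟩
      · exact ⟨∅, fun h => absurd h hi⟩
    choose Cs hCs using hCs
    have hclub : IsClubIn (⋂ i ∈ Set.Iio lam.ord, Cs i) μ.ord := by
      refine isClubIn_iInter (isSuccLimit_ord hlam.1).pos ?_ fun i hi => (hCs i hi).1
      rw [Cardinal.card_ord, hμ.cof_eq, max_eq_right hlam.1]
      exact hlamμ
    obtain ⟨β, hβT, hβC⟩ := isStatIn_Tset hμ hκs (hκslam.trans hlamμ) _ hclub
    have hgβ := hgA β hβT
    have hmem : β ∈ {β | β ∈ Tset μ κs ∧ g β ≤ g β} ∩ Cs (g β) :=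
      ⟨⟨hβT, le_rfl⟩, Set.mem_iInter₂.1 hβC (g β) hgβ⟩
    exact Set.eq_empty_iff_forall_notMem.1 (hCs (g β) hgβ).2 β hmem
  obtain ⟨istar, histar, hStat⟩ := hD
  -- Step 6: reflect and derive a contradiction
  obtain ⟨α, hαT, hSα⟩ := hRef {β | β ∈ Tset μ κs ∧ g β ≤ istar} (fun β hβ => hβ.1) hStat
  obtain ⟨hαμ, hαcof⟩ := hαT
  have hαlam : ℵ₀ < α.cof := by rw [hαcof]; exact hunc
  have hαlim : Order.IsSuccLimit α := aleph0_le_cof.1 hαlam.le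
  obtain ⟨C, hCclub, hCmono⟩ := hF2 α ⟨hαμ, hαcof⟩
  have hC' : IsClubIn (limitPts C α) α := isClubIn_limitPts hαlam hCclub
  have hstep2 : ∀ δ, ∃ γ, δ < α →
      ((γ ∈ C ∧ γ ∈ Tset μ κ ∧ F γ < istar) ∧ δ < γ ∧ γ < α) := by
    intro δ
    by_cases hδ : δ < α
    · have hclub2 : IsClubIn (limitPts C α ∩ Set.Ioo δ α) α :=
        IsClubIn.inter hαlam hC' (isClubIn_Ioo hαlim hδ)
      obtain ⟨β, hβS, hβC2⟩ := hSα _ hclub2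
      obtain ⟨⟨hβT, hβg⟩, hβα⟩ := hβS
      have hrestr : IsClubIn (C ∩ Set.Iio β) β := isClubIn_inter_Iio hCclub hβC2.1
      obtain ⟨γ, hγC, hγT, hγδ, hγF⟩ := hB β hβT _ hrestr δ hβC2.2.1
      exact ⟨γ, fun _ => ⟨⟨hγC.1, hγT, hγF.trans_le hβg⟩, hγδ, hγC.2.trans hβα⟩⟩
    · exact ⟨0, fun h => absurd h hδ⟩
  choose nxt2 hnxt2 using hstep2
  have hnxt2' : ∀ δ < α, nxt2 δ ∈ {γ | γ ∈ C ∧ γ ∈ Tset μ κ ∧ F γ < istar} ∧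
      δ < nxt2 δ ∧ nxt2 δ < α :=
    fun δ hδ => ⟨(hnxt2 δ hδ).1, (hnxt2 δ hδ).2.1, (hnxt2 δ hδ).2.2⟩
  have hvalid2 : ∀ ξ : Ordinal.{u}, ξ.card < lam → ξ.card < α.cof := by
    intro ξ h; rwa [hαcof]
  have hstrict : ∀ {x y : Ordinal.{u}}, x < y → y.card < lam →
      iterSup nxt2 x < iterSup nxt2 y :=
    fun hxy hy => iterSup_strictMono hnxt2' hxy (hvalid2 _ hy)
  have hmemD : ∀ ξ : Ordinal.{u}, ξ.card < lam →
      iterSup nxt2 ξ ∈ C ∧ iterSup nxt2 ξ ∈ Tset μ κ ∧ F (iterSup nxt2 ξ) < istar :=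
    fun ξ hξ => (iterSup_spec hnxt2' ξ (hvalid2 ξ hξ)).2.1
  have hFh : ∀ ξ : Ordinal.{u}, ξ.card < lam → ξ ≤ F (iterSup nxt2 ξ) := by
    intro ξ
    induction ξ using Ordinal.induction with
    | h ξ IH =>
      intro hξ
      refine le_of_forall_lt fun η hη => ?_
      have hηcard : η.card < lam := (Ordinal.card_le_card hη.le).trans_lt hξ
      have h1 : F (iterSup nxt2 η) < F (iterSup nxt2 ξ) :=
        hCmono ⟨(hmemD η hηcard).1, (hmemD η hηcard).2.1⟩
          ⟨(hmemD ξ hξ).1, (hmemD ξ hξ).2.1⟩ (hstrict hη hξ)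
      exact (IH η hη hηcard).trans_lt h1
  have histarcard : istar.card < lam := Cardinal.lt_ord.1 histar
  exact absurd (hFh istar histarcard) (not_le.2 (hmemD istar histarcard).2.2)



section LiftTransfer

theorem isClubIn_lift.{w, x} {α : Ordinal.{w}} {C : Set Ordinal.{w}} (hC : IsClubIn C α) :
    IsClubIn (Ordinal.lift.{x} '' C) (Ordinal.lift.{x} α) := by
  refine ⟨?_, ?_, ?_⟩
  · rintro y ⟨c, hc, rfl⟩
    exact Ordinal.lift_lt.2 (hC.1 hc)
  · intro β hβ
    obtain ⟨β', hβ', rfl⟩ := Ordinal.lt_lift_iff.1 hβ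
    obtain ⟨γ, hγ, hle⟩ := hC.2.1 β' hβ'
    exact ⟨_, Set.mem_image_of_mem _ hγ, Ordinal.lift_le.2 hle⟩
  · intro β hβ h0 hlim
    obtain ⟨β', hβ', rfl⟩ := Ordinal.lt_lift_iff.1 hβ
    have h0' : 0 < β' := by rwa [← Ordinal.lift_zero.{w,x}, Ordinal.lift_lt] at h0
    refine Set.mem_image_of_mem _ (hC.2.2 β' hβ' h0' fun γ hγ => ?_)
    obtain ⟨d, ⟨d', hd', rfl⟩, h1, h2⟩ := hlim (Ordinal.lift.{x} γ) (Ordinal.lift_lt.2 hγ)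
    exact ⟨d', hd', Ordinal.lift_lt.1 h1, Ordinal.lift_lt.1 h2⟩

theorem isClubIn_unlift.{w, x} {α : Ordinal.{w}} {D : Set Ordinal.{max w x}}
    (hD : IsClubIn D (Ordinal.lift.{x} α)) : IsClubIn {y | Ordinal.lift.{x} y ∈ D} α := by
  refine ⟨fun y hy => Ordinal.lift_lt.1 (hD.1 hy), ?_, ?_⟩
  · intro y hy
    obtain ⟨γ, hγ, hle⟩ := hD.2.1 _ (Ordinal.lift_lt.2 hy)
    obtain ⟨γ', hγ', rfl⟩ := Ordinal.lt_lift_iff.1 (hD.1 hγ)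
    exact ⟨γ', hγ, Ordinal.lift_le.1 hle⟩
  · intro β hβ h0 hlim
    refine hD.2.2 _ (Ordinal.lift_lt.2 hβ)
      (by rwa [← Ordinal.lift_zero.{w,x}, Ordinal.lift_lt]) fun γ hγ => ?_
    obtain ⟨γ', hγ', rfl⟩ := Ordinal.lt_lift_iff.1 hγ
    obtain ⟨d', hd', h1, h2⟩ := hlim γ' hγ'
    exact ⟨Ordinal.lift.{x} d', hd', Ordinal.lift_lt.2 h1, Ordinal.lift_lt.2 h2⟩

theorem mem_Tset_lift.{w, x} {μ κ : Cardinal.{w}} {y : Ordinal.{w}} :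
    y ∈ Tset μ κ ↔ Ordinal.lift.{x} y ∈ Tset (Cardinal.lift.{x} μ) (Cardinal.lift.{x} κ) := by
  show (y < μ.ord ∧ y.cof = κ) ↔
    (Ordinal.lift.{x} y < (Cardinal.lift.{x} μ).ord ∧ (Ordinal.lift.{x} y).cof = Cardinal.lift.{x} κ)
  rw [← Cardinal.lift_ord, Ordinal.lift_lt, ← Ordinal.lift_cof, Cardinal.lift_inj]

theorem snr_lift.{w, x} {μ lam κ : Cardinal.{w}} (h : Snr μ lam κ) :
    Snr (Cardinal.lift.{x} μ) (Cardinal.lift.{x} lam) (Cardinal.lift.{x} κ) := by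
  obtain ⟨F, hF1, hF2⟩ := h
  classical
  set F' : Ordinal.{max w x} → Ordinal.{max w x} := fun y =>
    if h : ∃ y', Ordinal.lift.{x} y' = y then Ordinal.lift.{x} (F h.choose) else 0 with hF'
  have hval : ∀ y : Ordinal.{w}, F' (Ordinal.lift.{x} y) = Ordinal.lift.{x} (F y) := by
    intro y
    have hex : ∃ y', Ordinal.lift.{x} y' = Ordinal.lift.{x} y := ⟨y, rfl⟩
    simp only [hF', dif_pos hex]
    exact congrArg (Ordinal.lift.{x}) (congrArg F (Ordinal.lift_inj.1 hex.choose_spec))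
  refine ⟨F', ?_, ?_⟩
  · intro y hy
    have hyord : y < Ordinal.lift.{x} μ.ord := by
      rw [Cardinal.lift_ord]; exact hy.1
    obtain ⟨y', hy', rfl⟩ := Ordinal.lt_lift_iff.1 hyord
    rw [hval, ← Cardinal.lift_ord, Ordinal.lift_lt]
    exact hF1 y' (mem_Tset_lift.mpr hy)
  · intro y hy
    have hyord : y < Ordinal.lift.{x} μ.ord := by
      rw [Cardinal.lift_ord]; exact hy.1
    obtain ⟨α, hαμ, rfl⟩ := Ordinal.lt_lift_iff.1 hyord
    obtain ⟨C, hC, hmono⟩ := hF2 α (mem_Tset_lift.mpr hy)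
    refine ⟨Ordinal.lift.{x} '' C, isClubIn_lift hC, ?_⟩
    rintro y ⟨⟨y', hy'C, rfl⟩, hyT⟩ z ⟨⟨z', hz'C, rfl⟩, hzT⟩ hyz
    rw [hval, hval, Ordinal.lift_lt]
    exact hmono ⟨hy'C, mem_Tset_lift.mpr hyT⟩ ⟨hz'C, mem_Tset_lift.mpr hzT⟩ (Ordinal.lift_lt.1 hyz)

theorem ref_lift.{w, x} {ν μ κ : Cardinal.{w}} (h : Ref ν μ κ) :
    Ref (Cardinal.lift.{x} ν) (Cardinal.lift.{x} μ) (Cardinal.lift.{x} κ) := by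
  intro S hSsub hSstat
  have hords : Ordinal.lift.{x} ν.ord = (Cardinal.lift.{x} ν).ord := Cardinal.lift_ord ν
  have hS'sub : {y | Ordinal.lift.{x} y ∈ S} ⊆ Tset ν κ :=
    fun y hy => mem_Tset_lift.mpr (hSsub hy)
  have hS'stat : IsStatIn {y | Ordinal.lift.{x} y ∈ S} ν.ord := by
    intro C hC
    obtain ⟨y, hyS, y', hy'C, rfl⟩ := hSstat _ (hords ▸ isClubIn_lift hC)
    exact ⟨y', hyS, hy'C⟩
  obtain ⟨α, hαT, hαstat⟩ := h _ hS'sub hS'stat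
  refine ⟨Ordinal.lift.{x} α, mem_Tset_lift.mp hαT, ?_⟩
  intro D hD
  obtain ⟨y, ⟨hyS', hyα⟩, hyD⟩ := hαstat _ (isClubIn_unlift hD)
  exact ⟨Ordinal.lift.{x} y, ⟨hyS', Ordinal.lift_lt.2 hyα⟩, hyD⟩

end LiftTransfer

end SnrAux

/-- `Snr(μ, λ, κ)` and `Ref(μ, λ, κ*)` cannot both hold, for regular `κ < κ* < λ < μ`;
in particular `Snr(ℵ₃, ℵ₂, ℵ₀)` implies the failure of `Ref(ℵ₃, ℵ₂, ℵ₁)`. -/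
theorem snr_excludes_ref (κ κs lam μ : Cardinal)
    (hκ : κ.IsRegular) (hκs : κs.IsRegular) (hlam : lam.IsRegular) (hμ : μ.IsRegular)
    (hκlam : κ < lam) (hlamμ : lam < μ) (hunc : Cardinal.aleph0 < lam)
    (hκκs : κ < κs) (hκslam : κs < lam) :
    (¬ (Snr μ lam κ ∧ Ref μ lam κs)) ∧
    (Snr (Cardinal.aleph 3) (Cardinal.aleph 2) (Cardinal.aleph 0) →
      ¬ Ref (Cardinal.aleph 3) (Cardinal.aleph 2) (Cardinal.aleph 1)) := by
  refine ⟨SnrAux.main hκ hκs hlam hμ hlamμ hunc hκκs hκslam, fun hSnr hRef => ?_⟩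
  have h1 := SnrAux.snr_lift.{u_2, u_3} hSnr
  have h2 := SnrAux.ref_lift.{u_3, u_2} hRef
  simp only [Cardinal.lift_aleph, Ordinal.lift_ofNat, Ordinal.lift_zero,
    Ordinal.lift_one] at h1 h2
  refine SnrAux.main ?_ ?_ ?_ ?_ ?_ ?_ ?_ ?_ ⟨h1, h2⟩
  · exact aleph_zero ▸ isRegular_aleph0
  · have := isRegular_aleph_succ (0:Ordinal)
    rwa [Ordinal.succ_zero] at this
  · have := isRegular_aleph_succ (1:Ordinal)
    rwa [Ordinal.succ_one] at this
  · have := isRegular_aleph_succ (2:Ordinal)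
    rwa [show Order.succ (2:Ordinal) = 3 by
      rw [← Ordinal.add_one_eq_succ]; exact_mod_cast (by norm_num : (2:ℕ) + 1 = 3)] at this
  · exact aleph_lt_aleph.2 (by exact_mod_cast (by norm_num : (2:ℕ) < 3))
  · rw [← aleph_zero]; exact aleph_lt_aleph.2 (by norm_num)
  · exact aleph_lt_aleph.2 (by norm_num)
  · exact aleph_lt_aleph.2 (by norm_num)
end

section
/- Let κ < λ < μ be regular cardinals with λ uncountable and let κ* be a regular cardinal with κ < κ* < λ. Let F : T^μ_κ → λ and define F* : T^μ_{κ*} → λ by F*(σ) = min over all clubs C in σ of sup{F(α) : α ∈ C ∩ T^μ_κ}. Suppose δ ∈ T^μ_λ and D is a club in δ such that F restricted to D ∩ T^μ_κ is strictly increasing. Then for every σ in lim(D) ∩ T^μ_{κ*} (where lim(D) denotes the set of limit points of D below δ), one has F*(σ) = sup{F(α) : α ∈ D ∩ σ ∩ T^μ_κ}, and F* restricted to lim(D) ∩ T^μ_{κ*} is strictly increasing. -/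
open Cardinal Ordinal Set

/-- The set of limit points of `D` below `δ`. -/
def limPts (D : Set Ordinal) (δ : Ordinal) : Set Ordinal :=
  {β | β < δ ∧ ∀ γ < β, ∃ x ∈ D, γ < x ∧ x < β}

noncomputable def nextPt (C : Set Ordinal) (x : Ordinal) : Ordinal :=
  sInf (C ∩ Set.Ioi x)

lemma nextPt_spec {C : Set Ordinal} {σ : Ordinal} (hC : IsClubIn C σ)
    (hσ : Order.IsSuccLimit σ) {x : Ordinal} (hx : x < σ) :
    nextPt C x ∈ C ∧ x < nextPt C x ∧ nextPt C x < σ := by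
  obtain ⟨γ, hγC, hγ⟩ := hC.2.1 (x + 1) (hσ.succ_lt hx)
  have hne : (C ∩ Set.Ioi x).Nonempty := ⟨γ, hγC, lt_of_lt_of_le (lt_add_one x) hγ⟩
  have hmem := csInf_mem hne
  exact ⟨hmem.1, hmem.2, hC.1 hmem.1⟩

universe u

noncomputable def altSeq (s : Ordinal.{u} → Ordinal.{u}) (γ : Ordinal.{u}) (i : Ordinal.{u}) :
    Ordinal.{u} :=
  s (max γ (Ordinal.bsup.{u, u} i (fun j hj => altSeq s γ j)))
termination_by i
decreasing_by exact hj

theorem altSeq_def (s : Ordinal.{u} → Ordinal.{u}) (γ i : Ordinal.{u}) :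
    altSeq s γ i = s (max γ (Ordinal.bsup.{u, u} i (fun j _ => altSeq s γ j))) := by
  rw [altSeq]

lemma exists_pt {κ : Cardinal} (hκ : κ.IsRegular) {σ : Ordinal}
    (hσ : κ < σ.cof) {C₁ C₂ : Set Ordinal}
    (h1 : IsClubIn C₁ σ) (h2 : IsClubIn C₂ σ) {γ : Ordinal} (hγ : γ < σ) :
    ∃ β, β ∈ C₁ ∧ β ∈ C₂ ∧ γ < β ∧ β < σ ∧ Ordinal.cof β = κ := by
  have hσlim : Order.IsSuccLimit σ := aleph0_le_cof.1 ((hκ.aleph0_le.trans hσ.le))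
  have hκord : Order.IsSuccLimit κ.ord := isSuccLimit_ord hκ.aleph0_le
  set s : Ordinal → Ordinal := fun x => nextPt C₂ (nextPt C₁ x) with hs
  have hstep : ∀ x < σ, x < s x ∧ s x < σ ∧ s x ∈ C₂ ∧
      ∃ c ∈ C₁, x < c ∧ c < s x := by
    intro x hx
    obtain ⟨hc1, hc2, hc3⟩ := nextPt_spec h1 hσlim hx
    obtain ⟨hd1, hd2, hd3⟩ := nextPt_spec h2 hσlim hc3
    exact ⟨hc2.trans hd2, hd3, hd1, nextPt C₁ x, hc1, hc2, hd2⟩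
  set g : Ordinal → Ordinal := altSeq s γ with hg
  -- key invariant
  have key : ∀ i, i ≤ κ.ord →
      max γ (Ordinal.bsup i (fun j _ => g j)) < σ ∧ g i ∈ C₂ ∧
        max γ (Ordinal.bsup i (fun j _ => g j)) < g i ∧ g i < σ := by
    intro i
    induction i using Ordinal.induction with
    | _ i IH =>
      intro hi
      have hb : Ordinal.bsup i (fun j _ => g j) < σ := by
        apply Ordinal.bsup_lt_ord
        · exact lt_of_le_of_lt (by simpa using card_le_card hi) hσ
        · exact fun j hj => (IH j hj (le_of_lt (hj.trans_le hi))).2.2.2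
      have hm : max γ (Ordinal.bsup i (fun j _ => g j)) < σ := max_lt hγ hb
      obtain ⟨h1', h2', h3', _⟩ := hstep _ hm
      have hgi : g i = s (max γ (Ordinal.bsup i (fun j _ => g j))) := altSeq_def s γ i
      exact ⟨hm, by rw [hgi]; exact h3', by rw [hgi]; exact h1', by rw [hgi]; exact h2'⟩
  have gmono : ∀ j i, j < i → i ≤ κ.ord → g j < g i := by
    intro j i hji hi
    calc g j ≤ Ordinal.bsup i (fun j _ => g j) := Ordinal.le_bsup _ j hji
      _ ≤ max γ (Ordinal.bsup i (fun j _ => g j)) := le_max_right _ _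
      _ < g i := (key i hi).2.2.1
  set β := Ordinal.bsup κ.ord (fun j _ => g j) with hβ
  have hβσ : β < σ := by
    apply Ordinal.bsup_lt_ord
    · rwa [card_ord]
    · exact fun j hj => (key j hj.le).2.2.2
  have hgβ : ∀ j < κ.ord, g j < β := by
    intro j hj
    exact lt_of_lt_of_le (gmono j (Order.succ j) (Order.lt_succ j) (hκord.succ_lt hj).le)
      (Ordinal.le_bsup _ _ (hκord.succ_lt hj))
  have hγβ : γ < β := by
    have h0 : γ < g 0 := lt_of_le_of_lt (le_max_left _ _) (key 0 (le_of_lt hκord.pos)).2.2.1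
    exact h0.trans (hgβ 0 hκord.pos)
  have h0β : 0 < β := (zero_le (a := γ)).trans_lt hγβ
  have hcof2 : ∀ x < β, ∃ d ∈ C₂, x < d ∧ d < β := by
    intro x hx
    obtain ⟨j, hj, hxj⟩ := (Ordinal.lt_bsup _).1 hx
    exact ⟨g j, (key j hj.le).2.1, hxj, hgβ j hj⟩
  have hβC₂ : β ∈ C₂ := h2.2.2 β hβσ h0β hcof2
  have hβC₁ : β ∈ C₁ := by
    apply h1.2.2 β hβσ h0β
    intro x hx
    obtain ⟨j, hj, hxj⟩ := (Ordinal.lt_bsup _).1 hx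
    have hj' : Order.succ j < κ.ord := hκord.succ_lt hj
    have hm := (key (Order.succ j) hj'.le).1
    obtain ⟨_, _, _, c, hcC, hc1, hc2⟩ := hstep _ hm
    have hgi : g (Order.succ j) = s (max γ (Ordinal.bsup (Order.succ j) (fun j _ => g j))) :=
      altSeq_def s γ _
    refine ⟨c, hcC, ?_, ?_⟩
    · refine lt_of_lt_of_le hxj (le_trans ?_ (le_trans (le_max_right γ _) hc1.le))
      exact Ordinal.le_bsup _ j (Order.lt_succ j)
    · exact lt_of_lt_of_le hc2 (hgi ▸ (hgβ _ hj').le) |>.trans_le le_rfl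
  have hcofβ : Ordinal.cof β = κ := by
    apply le_antisymm
    · have := Ordinal.cof_bsup_le (fun i h => hgβ i h)
      rwa [card_ord] at this
    · rw [Ordinal.le_cof_iff_lsub]
      intro ι f hlsub
      by_contra hlt
      push_neg at hlt
      set t : ι → Ordinal := fun j => sInf {i | i < κ.ord ∧ f j < g i} with ht
      have htj : ∀ j, t j < κ.ord ∧ f j < g (t j) := by
        intro j
        have hfj : f j < β := hlsub ▸ Ordinal.lt_lsub f j
        obtain ⟨i, hi, hfi⟩ := (Ordinal.lt_bsup _).1 hfj
        exact csInf_mem (⟨i, hi, hfi⟩ : {i | i < κ.ord ∧ f j < g i}.Nonempty)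
      have hu : (⨆ j, Order.succ (t j)) < κ.ord := by
        apply Ordinal.iSup_lt_ord
        · rwa [hκ.cof_eq]
        · exact fun j => hκord.succ_lt (htj j).1
      set u := ⨆ j, Order.succ (t j) with hud
      have hfu : ∀ j, f j < g u := by
        intro j
        refine (htj j).2.trans (gmono (t j) u ?_ hu.le)
        exact lt_of_lt_of_le (Order.lt_succ (t j)) (le_ciSup (Ordinal.bddAbove_range _) j)
      have : β ≤ g u := hlsub ▸ Ordinal.lsub_le hfu
      exact absurd this (not_le.2 (hgβ u hu))
  exact ⟨β, hβC₁, hβC₂, hγβ, hβσ, hcofβ⟩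

lemma limPts_club {D : Set Ordinal} {δ σ : Ordinal} (hD : IsClubIn D δ)
    (hσ : σ ∈ limPts D δ) (hσlim : Order.IsSuccLimit σ) : IsClubIn (D ∩ Set.Iio σ) σ := by
  refine ⟨fun x hx => hx.2, ?_, ?_⟩
  · intro x hx
    obtain ⟨y, hyD, hxy, hyσ⟩ := hσ.2 x hx
    exact ⟨y, ⟨hyD, hyσ⟩, hxy.le⟩
  · intro x hx h0x hlim
    refine ⟨hD.2.2 x (hx.trans hσ.1) h0x ?_, hx⟩
    intro y hy
    obtain ⟨d, hd, h1, h2⟩ := hlim y hy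
    exact ⟨d, hd.1, h1, h2⟩

theorem fstar_increasing' (κ κs lam μ : Cardinal)
    (hκ : κ.IsRegular) (hκs : κs.IsRegular) (hlam : lam.IsRegular) (hμ : μ.IsRegular)
    (hκlam : κ < lam) (hlamμ : lam < μ) (hunc : Cardinal.aleph0 < lam)
    (hκκs : κ < κs) (hκslam : κs < lam)
    (F Fs : Ordinal → Ordinal)
    (hF : ∀ α ∈ Tset μ κ, F α < lam.ord)
    (hFs : ∀ σ ∈ Tset μ κs,
      Fs σ = sInf {x | ∃ C : Set Ordinal, IsClubIn C σ ∧
        x = sSup (F '' (C ∩ Tset μ κ))})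
    (δ : Ordinal) (hδ : δ ∈ Tset μ lam)
    (D : Set Ordinal) (hD : IsClubIn D δ)
    (hmono : StrictMonoOn F (D ∩ Tset μ κ)) :
    (∀ σ ∈ limPts D δ ∩ Tset μ κs,
      Fs σ = sSup (F '' (D ∩ Set.Iio σ ∩ Tset μ κ))) ∧
    StrictMonoOn Fs (limPts D δ ∩ Tset μ κs) := by
  have hbdd : ∀ S : Set Ordinal, S ⊆ Tset μ κ → BddAbove (F '' S) := by
    intro S hS
    refine ⟨lam.ord, ?_⟩
    rintro y ⟨α, hα, rfl⟩
    exact (hF α (hS hα)).le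
  have hA : ∀ σ ∈ limPts D δ ∩ Tset μ κs,
      Fs σ = sSup (F '' (D ∩ Set.Iio σ ∩ Tset μ κ)) := by
    rintro σ ⟨hσL, hσT⟩
    have hσcof : Ordinal.cof σ = κs := hσT.2
    have hκcof : κ < σ.cof := hσcof ▸ hκκs
    have hσlim : Order.IsSuccLimit σ := Ordinal.aleph0_le_cof.1 (hσcof ▸ hκs.aleph0_le)
    have hE : IsClubIn (D ∩ Set.Iio σ) σ := limPts_club hD hσL hσlim
    rw [hFs σ hσT]
    apply le_antisymm
    · exact csInf_le' ⟨D ∩ Set.Iio σ, hE, rfl⟩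
    · refine le_csInf ⟨sSup (F '' (D ∩ Set.Iio σ ∩ Tset μ κ)), D ∩ Set.Iio σ, hE, rfl⟩ ?_
      rintro x ⟨C, hC, rfl⟩
      apply csSup_le'
      rintro y ⟨α, ⟨⟨hαD, hασ⟩, hαT⟩, rfl⟩
      obtain ⟨β, hβC, hβE, hαβ, hβσ, hβcof⟩ := exists_pt hκ hκcof hC hE hασ
      have hβT : β ∈ Tset μ κ := ⟨hβσ.trans hσT.1, hβcof⟩
      refine le_trans (hmono ⟨hαD, hαT⟩ ⟨hβE.1, hβT⟩ hαβ).le ?_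
      exact le_csSup (hbdd _ inter_subset_right) ⟨β, ⟨hβC, hβT⟩, rfl⟩
  refine ⟨hA, ?_⟩
  rintro σ hσ τ hτ hστ
  rw [hA σ hσ, hA τ hτ]
  obtain ⟨hτL, hτT⟩ := hτ
  have hτcof : κ < τ.cof := hτT.2 ▸ hκκs
  have hτlim : Order.IsSuccLimit τ := Ordinal.aleph0_le_cof.1 (hτT.2 ▸ hκs.aleph0_le)
  have hEτ : IsClubIn (D ∩ Set.Iio τ) τ := limPts_club hD hτL hτlim
  obtain ⟨β, hβE, -, hσβ, hβτ, hβcof⟩ := exists_pt hκ hτcof hEτ hEτ hστ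
  obtain ⟨β', hβ'E, -, hββ', hβ'τ, hβ'cof⟩ := exists_pt hκ hτcof hEτ hEτ hβτ
  have hβT : β ∈ Tset μ κ := ⟨hβτ.trans hτT.1, hβcof⟩
  have hβ'T : β' ∈ Tset μ κ := ⟨hβ'τ.trans hτT.1, hβ'cof⟩
  calc sSup (F '' (D ∩ Set.Iio σ ∩ Tset μ κ)) ≤ F β := by
        apply csSup_le'
        rintro y ⟨α, ⟨⟨hαD, hασ⟩, hαT⟩, rfl⟩
        exact (hmono ⟨hαD, hαT⟩ ⟨hβE.1, hβT⟩ (hασ.trans hσβ)).le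
    _ < F β' := hmono ⟨hβE.1, hβT⟩ ⟨hβ'E.1, hβ'T⟩ hββ'
    _ ≤ sSup (F '' (D ∩ Set.Iio τ ∩ Tset μ κ)) :=
        le_csSup (hbdd _ inter_subset_right) ⟨β', ⟨hβ'E, hβ'T⟩, rfl⟩

/-- Let `F : T^μ_κ → λ` and let `F*` on `T^μ_{κ*}` be given by
`F*(σ) = min over clubs C in σ of sup {F α : α ∈ C ∩ T^μ_κ}`. If `δ ∈ T^μ_λ` and `D` is a
club in `δ` with `F` strictly increasing on `D ∩ T^μ_κ`, then for every
`σ ∈ lim(D) ∩ T^μ_{κ*}` we have `F*(σ) = sup {F α : α ∈ D ∩ σ ∩ T^μ_κ}`, and `F*` is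
strictly increasing on `lim(D) ∩ T^μ_{κ*}`. -/
theorem fstar_increasing (κ κs lam μ : Cardinal)
    (hκ : κ.IsRegular) (hκs : κs.IsRegular) (hlam : lam.IsRegular) (hμ : μ.IsRegular)
    (hκlam : κ < lam) (hlamμ : lam < μ) (hunc : Cardinal.aleph0 < lam)
    (hκκs : κ < κs) (hκslam : κs < lam)
    (F Fs : Ordinal → Ordinal)
    (hF : ∀ α ∈ Tset μ κ, F α < lam.ord)
    (hFs : ∀ σ ∈ Tset μ κs,
      Fs σ = sInf {x | ∃ C : Set Ordinal, IsClubIn C σ ∧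
        x = sSup (F '' (C ∩ Tset μ κ))})
    (δ : Ordinal) (hδ : δ ∈ Tset μ lam)
    (D : Set Ordinal) (hD : IsClubIn D δ)
    (hmono : StrictMonoOn F (D ∩ Tset μ κ)) :
    (∀ σ ∈ limPts D δ ∩ Tset μ κs,
      Fs σ = sSup (F '' (D ∩ Set.Iio σ ∩ Tset μ κ))) ∧
    StrictMonoOn Fs (limPts D δ ∩ Tset μ κs) := by
  exact fstar_increasing' κ κs lam μ hκ hκs hlam hμ hκlam hlamμ hunc hκκs hκslam
    F Fs hF hFs δ hδ D hD hmono
end
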